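/- arXiv:1410.0062 — 7 statements merged into one kernel-verified Lean document; each statement's English description precedes it below -/
import Mathlib

section
/- For any pseudometric d on a finite set X of even cardinality, there exists a tree-like pseudometric D on X with D(x,y) ≤ d(x,y) for all x,y ∈ X and m(X,D) = m(X,d). -/
/-- A matching on `X`: a partition of `X` into two-element subsets,
encoded as a fixed-point-free involution. -/
def IsMatching {X : Type*} (π : X → X) : Prop :=
  Function.Involutive π ∧ ∀ x, π x ≠ x

/-- The matching number of a matching `π` with respect to `d`:
`∑_{{x,y} ∈ π} d(x,y)` (each pair is counted twice in the sum, whence the division). -/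
noncomputable def matchVal {X : Type*} [Fintype X] (d : X → X → ℝ) (π : X → X) : ℝ :=
  (∑ x, d x (π x)) / 2

/-- The matching number `m(X,d)`: the minimum of `m(π,d)` over all matchings `π` on `X`. -/
noncomputable def matchNum {X : Type*} [Fintype X] (d : X → X → ℝ) : ℝ :=
  sInf {r | ∃ π : X → X, IsMatching π ∧ r = matchVal d π}

/-- `d` is a pseudometric on `X`. -/
def IsPseudometric {X : Type*} (d : X → X → ℝ) : Prop :=
  (∀ x, d x x = 0) ∧ (∀ x y, d x y = d y x) ∧ ∀ x y z, d x z ≤ d x y + d y z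

/-- The four-point (tree-likeness) condition. -/
def FourPoint {X : Type*} (d : X → X → ℝ) : Prop :=
  ∀ x₁ x₂ x₃ x₄, d x₁ x₃ + d x₂ x₄ ≤ max (d x₁ x₂ + d x₃ x₄) (d x₁ x₄ + d x₂ x₃)

section Basics
variable {X : Type*} [Fintype X]

lemma matching_exists (hX : Even (Fintype.card X)) : ∃ π : X → X, IsMatching π := by
  classical
  obtain ⟨k, hk⟩ := hX
  have hcard : Fintype.card X = 2 * k := by omega
  let e : X ≃ Fin (2 * k) := Fintype.equivFinOfCardEq hcard
  have hbound : ∀ v : Fin (2 * k), (if v.1 % 2 = 0 then v.1 + 1 else v.1 - 1) < 2 * k := by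
    intro v; have := v.2; split_ifs <;> omega
  set f : X → X := fun x => e.symm ⟨_, hbound (e x)⟩ with hf
  have hef : ∀ x, (e (f x)).1 = if (e x).1 % 2 = 0 then (e x).1 + 1 else (e x).1 - 1 := by
    intro x; simp [hf]
  refine ⟨f, ?_, ?_⟩
  · intro x
    have h1 := hef (f x)
    have h2 := hef x
    have h3 : (e (f (f x))).1 = (e x).1 := by
      rw [h1, h2]; have := (e x).2; split_ifs <;> omega
    exact e.injective (Fin.ext h3)
  · intro x h
    have h2 := hef x
    rw [h] at h2
    have := (e x).2
    split_ifs at h2 <;> omega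

lemma matchSet_finite (D : X → X → ℝ) :
    {r | ∃ π : X → X, IsMatching π ∧ r = matchVal D π}.Finite := by
  classical
  have : {r | ∃ π : X → X, IsMatching π ∧ r = matchVal D π} ⊆
      Set.range (matchVal D) := by
    rintro r ⟨π, _, rfl⟩; exact ⟨π, rfl⟩
  exact (Set.finite_range _).subset this

lemma matchNum_le {D : X → X → ℝ} {π : X → X} (hπ : IsMatching π) :
    matchNum D ≤ matchVal D π :=
  csInf_le (matchSet_finite D).bddBelow ⟨π, hπ, rfl⟩

lemma le_matchNum (hX : Even (Fintype.card X)) {D : X → X → ℝ} {c : ℝ}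
    (h : ∀ π : X → X, IsMatching π → c ≤ matchVal D π) : c ≤ matchNum D := by
  obtain ⟨π₀, hπ₀⟩ := matching_exists (X := X) hX
  exact le_csInf ⟨_, π₀, hπ₀, rfl⟩ (by rintro r ⟨π, hπ, rfl⟩; exact h π hπ)

lemma matchNum_attained (hX : Even (Fintype.card X)) (D : X → X → ℝ) :
    ∃ π : X → X, IsMatching π ∧ matchNum D = matchVal D π := by
  obtain ⟨π₀, hπ₀⟩ := matching_exists (X := X) hX
  have := (Set.Nonempty.csInf_mem ⟨_, π₀, hπ₀, rfl⟩ (matchSet_finite D) :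
    matchNum D ∈ {r | ∃ π : X → X, IsMatching π ∧ r = matchVal D π})
  exact this

lemma matchVal_mono {D d : X → X → ℝ} (h : ∀ x y, D x y ≤ d x y) (π : X → X) :
    matchVal D π ≤ matchVal d π := by
  unfold matchVal
  have : (∑ x, D x (π x)) ≤ ∑ x, d x (π x) :=
    Finset.sum_le_sum fun x _ => h x (π x)
  linarith

lemma IsPseudometric.nonneg {D : X → X → ℝ} (hD : IsPseudometric D) (x y : X) :
    0 ≤ D x y := by
  have h1 := hD.2.2 x y x
  rw [hD.1, hD.2.1 y x] at h1
  linarith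

lemma IsPseudometric.twin {D : X → X → ℝ} (hD : IsPseudometric D) {a b : X}
    (h : D a b = 0) (w : X) : D a w = D b w := by
  have h1 := hD.2.2 a b w
  have h2 := hD.2.2 b a w
  rw [hD.2.1 b a] at h2
  linarith

end Basics

section MatchingOps
variable {X : Type*} [Fintype X]

lemma sum_sub_support {f g : X → ℝ} (s : Finset X) (h : ∀ x ∉ s, f x = g x) :
    ∑ x, f x = (∑ x, g x) + ∑ x ∈ s, (f x - g x) := by
  have h1 : ∑ x ∈ s, (f x - g x) = ∑ x, (f x - g x) :=
    Finset.sum_subset (Finset.subset_univ s) (fun x _ hx => by rw [h x hx]; ring)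
  rw [h1, Finset.sum_sub_distrib]; ring

lemma sum_four [DecidableEq X] (f : X → ℝ) {p q u v : X} (hpq : p ≠ q) (hpu : p ≠ u)
    (hpv : p ≠ v) (hqu : q ≠ u) (hqv : q ≠ v) (huv : u ≠ v) :
    ∑ z ∈ ({p, q, u, v} : Finset X), f z = f p + f q + f u + f v := by
  rw [Finset.sum_insert (by simp [hpq, hpu, hpv]), Finset.sum_insert (by simp [hqu, hqv]),
    Finset.sum_insert (by simp [huv]), Finset.sum_singleton]
  ring

lemma IsMatching.conj {π : X → X} (hπ : IsMatching π) (e : X ≃ X) :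
    IsMatching (fun x => e (π (e.symm x))) := by
  constructor
  · intro x
    simp [hπ.1 (e.symm x)]
  · intro x h
    apply hπ.2 (e.symm x)
    have h' : e (π (e.symm x)) = x := h
    calc π (e.symm x) = e.symm (e (π (e.symm x))) := by simp
      _ = e.symm x := by rw [h']

lemma matchVal_conj (D : X → X → ℝ) (π : X → X) (e : X ≃ X)
    (he : ∀ x y, D (e x) (e y) = D x y) :
    matchVal D (fun x => e (π (e.symm x))) = matchVal D π := by
  unfold matchVal
  congr 1
  calc ∑ x, D x (e (π (e.symm x)))
      = ∑ x, D (e x) (e (π (e.symm (e x)))) := (Equiv.sum_comp e _).symm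
    _ = ∑ x, D x (π x) := by simp [he]

lemma twin_swap_isometry [DecidableEq X] {D : X → X → ℝ} (hD : IsPseudometric D) {a b : X}
    (hab : D a b = 0) : ∀ z w, D (Equiv.swap a b z) (Equiv.swap a b w) = D z w := by
  have h1 : ∀ z w, D (Equiv.swap a b z) w = D z w := by
    intro z w
    rcases eq_or_ne z a with rfl | hza
    · rw [Equiv.swap_apply_left]; exact (hD.twin hab w).symm
    rcases eq_or_ne z b with rfl | hzb
    · rw [Equiv.swap_apply_right]; exact hD.twin hab w
    · rw [Equiv.swap_apply_of_ne_of_ne hza hzb]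
  intro z w
  rw [h1, hD.2.1, h1, hD.2.1]

lemma exists_matching_through_pair {D : X → X → ℝ} (hD : IsPseudometric D)
    {π : X → X} (hπ : IsMatching π) {x y p u : X}
    (hxy : π x = y) (hpx : D p x = 0) (huy : D u y = 0) (hpu : D p u ≠ 0) :
    ∃ π', IsMatching π' ∧ matchVal D π' = matchVal D π ∧ π' p = u := by
  classical
  have hyx : y ≠ x := fun h => hπ.2 x (h ▸ hxy)
  have hyp : y ≠ p := fun h => hpu (by rw [hD.2.1]; exact h ▸ huy)
  have hpune : p ≠ u := by rintro rfl; exact hpu (hD.1 p)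
  set e₁ := Equiv.swap x p with he₁
  have hiso₁ := twin_swap_isometry hD (show D x p = 0 by rw [hD.2.1]; exact hpx)
  set π' := fun z => e₁ (π (e₁.symm z)) with hπ'def
  have hm' : IsMatching π' := hπ.conj e₁
  have hv' : matchVal D π' = matchVal D π := matchVal_conj D π e₁ hiso₁
  have hp' : π' p = y := by
    simp only [hπ'def, he₁, Equiv.symm_swap]
    rw [Equiv.swap_apply_right, hxy, Equiv.swap_apply_of_ne_of_ne hyx hyp]
  have hyu : D y u = 0 := by rw [hD.2.1]; exact huy
  set e₂ := Equiv.swap y u with he₂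
  have hiso₂ := twin_swap_isometry hD hyu
  set π'' := fun z => e₂ (π' (e₂.symm z)) with hπ''def
  have hpy : p ≠ y := hyp.symm
  have hpu2 : p ≠ u := hpune
  refine ⟨π'', hm'.conj e₂, ?_, ?_⟩
  · rw [matchVal_conj D π' e₂ hiso₂, hv']
  · simp only [hπ''def, he₂, Equiv.symm_swap]
    rw [Equiv.swap_apply_of_ne_of_ne hpy hpu2, hp', Equiv.swap_apply_left]

lemma rewire {D : X → X → ℝ} (hsym : ∀ x y, D x y = D y x) {π : X → X} (hπ : IsMatching π)
    {p q u v : X} (hp : π p = u) (hq : π q = v)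
    (hpq : p ≠ q) (hpv : p ≠ v) (hqu : q ≠ u) (huv : u ≠ v) (hpu : p ≠ u) (hqv : q ≠ v) :
    ∃ π', IsMatching π' ∧
      matchVal D π' = matchVal D π + (D p q + D u v) - (D p u + D q v) := by
  classical
  set e := Equiv.swap u q with he
  set π' := fun z => e (π (e.symm z)) with hdef
  have hπu : π u = p := by rw [← hp, hπ.1]
  have hπv : π v = q := by rw [← hq, hπ.1]
  have huq : u ≠ q := hqu.symm
  have e1 : π' p = q := by
    simp only [hdef, he, Equiv.symm_swap]
    rw [Equiv.swap_apply_of_ne_of_ne hpu hpq, hp, Equiv.swap_apply_left]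
  have e2 : π' q = p := by
    simp only [hdef, he, Equiv.symm_swap]
    rw [Equiv.swap_apply_right, hπu, Equiv.swap_apply_of_ne_of_ne hpu hpq]
  have e3 : π' u = v := by
    simp only [hdef, he, Equiv.symm_swap]
    rw [Equiv.swap_apply_left, hq, Equiv.swap_apply_of_ne_of_ne huv.symm hqv.symm]
  have e4 : π' v = u := by
    simp only [hdef, he, Equiv.symm_swap]
    rw [Equiv.swap_apply_of_ne_of_ne huv.symm hqv.symm, hπv, Equiv.swap_apply_right]
  have hout : ∀ z ∉ ({p, q, u, v} : Finset X), D z (π' z) = D z (π z) := by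
    intro z hz
    simp only [Finset.mem_insert, Finset.mem_singleton, not_or] at hz
    obtain ⟨hzp, hzq, hzu, hzv⟩ := hz
    have h1 : e.symm z = z := by
      rw [he, Equiv.symm_swap, Equiv.swap_apply_of_ne_of_ne hzu hzq]
    have h2 : π z ≠ u := fun h => hzp (by rw [← hπ.1 z, h, hπu])
    have h3 : π z ≠ q := fun h => hzv (by rw [← hπ.1 z, h, ← hπv, hπ.1])
    simp only [hdef, h1]
    rw [he, Equiv.swap_apply_of_ne_of_ne h2 h3]
  refine ⟨π', hπ.conj e, ?_⟩
  have hsum : (∑ x, D x (π' x)) = (∑ x, D x (π x)) +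
      ∑ z ∈ ({p, q, u, v} : Finset X), (D z (π' z) - D z (π z)) :=
    sum_sub_support _ hout
  have h4 : ∑ z ∈ ({p, q, u, v} : Finset X), (D z (π' z) - D z (π z)) =
      (D p (π' p) - D p (π p)) + (D q (π' q) - D q (π q)) + (D u (π' u) - D u (π u)) +
      (D v (π' v) - D v (π v)) :=
    sum_four _ hpq hpu hpv hqu hqv huv
  unfold matchVal
  rw [hsum, h4, e1, e2, e3, e4, hp, hq, hπu, hπv]
  rw [hsym q p, hsym v u, hsym u p, hsym v q]
  ring

end MatchingOps

section Cycle
variable {X : Type*} [Fintype X]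

lemma cycle_lemma {D : X → X → ℝ} (hD : IsPseudometric D) {m : ℝ}
    (hall : ∀ π : X → X, IsMatching π → m ≤ matchVal D π)
    {π₁ π₂ : X → X} (h₁ : IsMatching π₁) (h₂ : IsMatching π₂)
    (hv₁ : matchVal D π₁ = m) (hv₂ : matchVal D π₂ = m)
    {p q u v : X} (hpu : π₁ p = u) (hqv : π₂ q = v)
    (hbad : max (D p q + D u v) (D p v + D q u) < D p u + D q v)
    (hpq : p ≠ q) (hpv : p ≠ v) (hqu : q ≠ u) (huv : u ≠ v)
    (hpune : p ≠ u) (hqvne : q ≠ v) : False := by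
  classical
  set g : X → X := fun x => π₂ (π₁ x) with hg
  set a : ℕ → X := fun k => g^[k] p with ha
  set b : ℕ → X := fun k => π₁ (a k) with hb
  have ha0 : a 0 = p := rfl
  have hb0 : b 0 = u := by simp only [hb, ha0]; exact hpu
  have hasucc : ∀ k, a (k + 1) = g (a k) := by
    intro k; simp only [ha]; exact Function.iterate_succ_apply' g k p
  have hπ₁a : ∀ k, π₁ (a k) = b k := fun k => rfl
  have hπ₁b : ∀ k, π₁ (b k) = a k := fun k => h₁.1 (a k)
  have hπ₂b : ∀ k, π₂ (b k) = a (k + 1) := by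
    intro k; rw [hasucc k]
  have hπ₂a : ∀ k, π₂ (a (k + 1)) = b k := by
    intro k; rw [← hπ₂b k, h₂.1]
  have hπ₁u : π₁ u = p := by rw [← hpu, h₁.1]
  have hginj : Function.Injective g := by
    simp only [hg]; exact Function.Injective.comp h₂.1.injective h₁.1.injective
  have gbase1 : ∀ y, g (π₁ (g y)) = π₁ y := by
    intro y; simp only [hg]; rw [h₁.1, h₂.1]
  have gbase2 : ∀ y, g (π₂ (g y)) = π₂ y := by
    intro y; simp only [hg]; rw [h₂.1, h₁.1]
  have conj1 : ∀ j x, g^[j] (π₁ (g^[j] x)) = π₁ x := by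
    intro j
    induction j with
    | zero => intro x; simp
    | succ n ih =>
      intro x
      rw [Function.iterate_succ_apply g n x,
        Function.iterate_succ_apply' g n (π₁ (g^[n] (g x))), ih (g x), gbase1]
  have conj2 : ∀ j x, g^[j] (π₂ (g^[j] x)) = π₂ x := by
    intro j
    induction j with
    | zero => intro x; simp
    | succ n ih =>
      intro x
      rw [Function.iterate_succ_apply g n x,
        Function.iterate_succ_apply' g n (π₂ (g^[n] (g x))), ih (g x), gbase2]
  have hab : ∀ i j, a i ≠ b j := by
    intro i j h
    simp only [ha, hb] at h
    have ht : g^[j + i] p = π₁ p := by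
      have h2 := congrArg (g^[j]) h
      rw [conj1 j p] at h2
      rw [← Function.iterate_add_apply] at h2
      exact h2
    rcases Nat.even_or_odd (j + i) with ⟨s, hs⟩ | ⟨s, hs⟩
    · have h1 : g^[s] (π₁ (g^[s] p)) = π₁ p := conj1 s p
      have h3 : π₁ (g^[s] p) = g^[s] p := by
        apply hginj.iterate s
        rw [h1, ← ht, ← Function.iterate_add_apply]
        rw [show j + i = s + s from hs]
      exact h₁.2 _ h3
    · have ht2 : g^[(j + i) + 1] p = π₂ p := by
        rw [Function.iterate_succ_apply', ht]
        simp only [hg]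
        rw [h₁.1]
      have h1 : g^[s + 1] (π₂ (g^[s + 1] p)) = π₂ p := conj2 (s + 1) p
      have h3 : π₂ (g^[s + 1] p) = g^[s + 1] p := by
        apply hginj.iterate (s + 1)
        rw [h1, ← ht2, ← Function.iterate_add_apply]
        rw [show j + i + 1 = (s + 1) + (s + 1) by omega]
      exact h₂.2 _ h3
  have hper : p ∈ Function.periodicPts g := by
    have hbij : Function.Bijective g := Finite.injective_iff_bijective.mp hginj
    set gE : Equiv.Perm X := Equiv.ofBijective g hbij with hgE
    refine ⟨orderOf gE, orderOf_pos _, ?_⟩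
    show g^[orderOf gE] p = p
    have hfix : (gE ^ orderOf gE) p = p := by rw [pow_orderOf_eq_one]; rfl
    calc g^[orderOf gE] p = (⇑gE)^[orderOf gE] p := rfl
      _ = (gE ^ orderOf gE) p := by rw [Equiv.Perm.iterate_eq_pow]
      _ = p := hfix
  set r : ℕ := Function.minimalPeriod g p with hr
  have rpos : 0 < r := Function.minimalPeriod_pos_of_mem_periodicPts hper
  have aper : a r = p := by simp only [ha, hr]; exact Function.iterate_minimalPeriod
  have amod : ∀ j, a (j % r) = a j := by
    intro j; simp only [ha, hr]; exact Function.iterate_mod_minimalPeriod_eq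
  have ainj : ∀ i j, i < r → j < r → a i = a j → i = j := by
    intro i j hi hj hij
    simp only [ha] at hij
    exact Function.iterate_injOn_Iio_minimalPeriod (Set.mem_Iio.mpr hi) (Set.mem_Iio.mpr hj) hij
  have hbne : ∀ i j, i < r → j < r → b i = b j → i = j := by
    intro i j hi hj h
    apply ainj i j hi hj
    have := congrArg π₁ h
    rwa [hπ₁b, hπ₁b] at this
  have hap : ∀ j, 1 ≤ j → j < r → a j ≠ p := by
    intro j h1 h2 h
    have := ainj j 0 h2 rpos (by rw [h, ha0])
    omega
  have hπ₂p : π₂ p = b (r - 1) := by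
    have h1 : a ((r - 1) + 1) = p := by rw [show r - 1 + 1 = r by omega, aper]
    rw [← h1, hπ₂a]
  by_cases hqC : ∃ j, q = a j ∨ q = b j
  · -- Case B : q on the cycle of p
    obtain ⟨j₀, hj₀⟩ := hqC
    have hj' : q = a (j₀ % r) ∨ q = b (j₀ % r) := by
      rcases hj₀ with h | h
      · left; rw [h, ← amod j₀]
      · right; rw [h]; exact congrArg π₁ (amod j₀).symm
    have hj'r : j₀ % r < r := Nat.mod_lt _ rpos
    obtain ⟨k, hk1, hk2, hcase⟩ :
        ∃ k, 1 ≤ k ∧ k + 1 < r ∧ ((q = b k ∧ v = a (k+1)) ∨ (q = a (k+1) ∧ v = b k)) := by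
      rcases hj' with h | h
      · have hj0 : j₀ % r ≠ 0 := by
          intro h0; rw [h0, ha0] at h; exact hpq h.symm
        obtain ⟨k, hkeq⟩ : ∃ k, j₀ % r = k + 1 := ⟨j₀ % r - 1, by omega⟩
        rw [hkeq] at h hj'r
        have hv : v = b k := by rw [← hqv, h, hπ₂a]
        have hk1 : 1 ≤ k := by
          by_contra hk
          have hk0 : k = 0 := by omega
          apply huv
          rw [hv, hk0, hb0]
        exact ⟨k, hk1, hj'r, Or.inr ⟨h, hv⟩⟩
      · have hj0 : j₀ % r ≠ 0 := by
          intro h0; rw [h0, hb0] at h; exact hqu h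
        have hv : v = a (j₀ % r + 1) := by rw [← hqv, h, hπ₂b]
        have hkr : j₀ % r + 1 < r := by
          rcases Nat.lt_or_ge (j₀ % r + 1) r with h' | h'
          · exact h'
          · exfalso
            have heq : j₀ % r + 1 = r := by omega
            apply hpv
            rw [hv, heq, aper]
        exact ⟨j₀ % r, by omega, hkr, Or.inl ⟨h, hv⟩⟩
    -- basic distinctness between the four special points p, u, b k, a (k+1)
    have hd_pu : p ≠ u := hpune
    have hd_pbk : p ≠ b k := by rw [← ha0]; exact hab 0 k
    have hd_pak : p ≠ a (k + 1) := fun h => hap (k+1) (by omega) hk2 h.symm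
    have hd_ubk : u ≠ b k := by
      rw [← hb0]; intro h; have := hbne 0 k rpos (by omega) h; omega
    have hd_uak : u ≠ a (k + 1) := by rw [← hb0]; exact fun h => hab (k+1) 0 h.symm
    have hd_bkak : b k ≠ a (k + 1) := fun h => hab (k+1) k h.symm
    -- the two surgery matchings N and N'
    set N : X → X := fun x => if x = p then b k else if x = b k then p else
      if (∃ j, k + 1 ≤ j ∧ j < r ∧ (x = a j ∨ x = b j)) then π₁ x else π₂ x with hN
    set N' : X → X := fun x => if x = u then a (k+1) else if x = a (k+1) then u else
      if ((∃ j, k + 1 ≤ j ∧ j < r ∧ x = b j) ∨ (∃ j, k + 2 ≤ j ∧ j ≤ r ∧ x = a j))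
        then π₂ x else π₁ x with hN'
    -- membership facts for S1
    have hpS1 : ¬ (∃ j, k + 1 ≤ j ∧ j < r ∧ (p = a j ∨ p = b j)) := by
      rintro ⟨j, hj1, hj2, hj3 | hj3⟩
      · exact hap j (by omega) hj2 hj3.symm
      · exact hab 0 j (ha0.trans hj3)
    have hbkS1 : ¬ (∃ j, k + 1 ≤ j ∧ j < r ∧ (b k = a j ∨ b k = b j)) := by
      rintro ⟨j, hj1, hj2, hj3 | hj3⟩
      · exact hab j k hj3.symm
      · have := hbne k j (by omega) hj2 hj3; omega
    have huS1 : ¬ (∃ j, k + 1 ≤ j ∧ j < r ∧ (u = a j ∨ u = b j)) := by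
      rintro ⟨j, hj1, hj2, hj3 | hj3⟩
      · exact hab j 0 (hj3.symm.trans hb0.symm)
      · rw [← hb0] at hj3; have := hbne 0 j rpos hj2 hj3; omega
    have hakS1 : (∃ j, k + 1 ≤ j ∧ j < r ∧ (a (k+1) = a j ∨ a (k+1) = b j)) :=
      ⟨k + 1, le_refl _, hk2, Or.inl rfl⟩
    -- membership facts for S2
    have hpS2 : ((∃ j, k + 1 ≤ j ∧ j < r ∧ p = b j) ∨ (∃ j, k + 2 ≤ j ∧ j ≤ r ∧ p = a j)) :=
      Or.inr ⟨r, by omega, le_refl _, aper.symm⟩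
    have huS2 : ¬ ((∃ j, k + 1 ≤ j ∧ j < r ∧ u = b j) ∨ (∃ j, k + 2 ≤ j ∧ j ≤ r ∧ u = a j)) := by
      rintro (⟨j, hj1, hj2, hj3⟩ | ⟨j, hj1, hj2, hj3⟩)
      · rw [← hb0] at hj3; have := hbne 0 j rpos hj2 hj3; omega
      · rw [← hb0] at hj3; exact hab j 0 hj3.symm
    have hakS2 : ¬ ((∃ j, k + 1 ≤ j ∧ j < r ∧ a (k+1) = b j) ∨
        (∃ j, k + 2 ≤ j ∧ j ≤ r ∧ a (k+1) = a j)) := by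
      rintro (⟨j, hj1, hj2, hj3⟩ | ⟨j, hj1, hj2, hj3⟩)
      · exact hab (k+1) j hj3
      · rcases Nat.eq_or_lt_of_le hj2 with h' | h'
        · rw [h', aper] at hj3; exact hd_pak hj3.symm
        · have := ainj (k+1) j hk2 h' hj3; omega
    have hbkS2 : ¬ ((∃ j, k + 1 ≤ j ∧ j < r ∧ b k = b j) ∨
        (∃ j, k + 2 ≤ j ∧ j ≤ r ∧ b k = a j)) := by
      rintro (⟨j, hj1, hj2, hj3⟩ | ⟨j, hj1, hj2, hj3⟩)
      · have := hbne k j (by omega) hj2 hj3; omega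
      · exact hab j k hj3.symm
    -- evaluation of N
    have hNp : N p = b k := by simp only [hN]; rw [if_pos trivial]
    have hNbk : N (b k) = p := by
      simp only [hN]; rw [if_neg (Ne.symm hd_pbk), if_pos trivial]
    have hNS1 : ∀ x, (∃ j, k + 1 ≤ j ∧ j < r ∧ (x = a j ∨ x = b j)) → N x = π₁ x := by
      intro x hx
      have hx1 : x ≠ p := fun h => hpS1 (h ▸ hx)
      have hx2 : x ≠ b k := fun h => hbkS1 (h ▸ hx)
      simp only [hN]; rw [if_neg hx1, if_neg hx2, if_pos hx]
    have hNelse : ∀ x, x ≠ p → x ≠ b k →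
        ¬ (∃ j, k + 1 ≤ j ∧ j < r ∧ (x = a j ∨ x = b j)) → N x = π₂ x := by
      intro x h1 h2 h3
      simp only [hN]; rw [if_neg h1, if_neg h2, if_neg h3]
    -- closure of S1 under π₁
    have hS1π₁ : ∀ x, (∃ j, k + 1 ≤ j ∧ j < r ∧ (x = a j ∨ x = b j)) →
        (∃ j, k + 1 ≤ j ∧ j < r ∧ (π₁ x = a j ∨ π₁ x = b j)) := by
      rintro x ⟨j, hj1, hj2, hj3 | hj3⟩
      · exact ⟨j, hj1, hj2, Or.inr (by rw [hj3])⟩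
      · exact ⟨j, hj1, hj2, Or.inl (by rw [hj3, hπ₁b])⟩
    -- out-closure for N's else branch
    have hNout : ∀ x, x ≠ p → x ≠ b k →
        ¬ (∃ j, k + 1 ≤ j ∧ j < r ∧ (x = a j ∨ x = b j)) →
        (π₂ x ≠ p ∧ π₂ x ≠ b k ∧
          ¬ (∃ j, k + 1 ≤ j ∧ j < r ∧ (π₂ x = a j ∨ π₂ x = b j))) := by
      intro x h1 h2 h3
      refine ⟨?_, ?_, ?_⟩
      · intro h
        have : x = π₂ p := by rw [← h, h₂.1]
        rw [hπ₂p] at this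
        exact h3 ⟨r - 1, by omega, by omega, Or.inr this⟩
      · intro h
        have : x = π₂ (b k) := by rw [← h, h₂.1]
        rw [hπ₂b] at this
        exact h3 ⟨k + 1, le_refl _, hk2, Or.inl this⟩
      · rintro ⟨j, hj1, hj2, hj3 | hj3⟩
        · have hx : x = π₂ (a j) := by rw [← hj3, h₂.1]
          obtain ⟨i, hieq⟩ : ∃ i, j = i + 1 := ⟨j - 1, by omega⟩
          rw [hieq, hπ₂a] at hx
          rcases Nat.eq_or_lt_of_le (show k ≤ i by omega) with h' | h'
          · exact h2 (by rw [hx, h'])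
          · exact h3 ⟨i, by omega, by omega, Or.inr hx⟩
        · have hx : x = π₂ (b j) := by rw [← hj3, h₂.1]
          rw [hπ₂b] at hx
          rcases Nat.eq_or_lt_of_le (show j + 1 ≤ r by omega) with h' | h'
          · rw [h', aper] at hx; exact h1 hx
          · exact h3 ⟨j + 1, by omega, h', Or.inl hx⟩
    have hmN : IsMatching N := by
      constructor
      · intro x
        rcases eq_or_ne x p with rfl | hx1
        · rw [hNp, hNbk]
        rcases eq_or_ne x (b k) with rfl | hx2
        · rw [hNbk, hNp]
        by_cases hx3 : (∃ j, k + 1 ≤ j ∧ j < r ∧ (x = a j ∨ x = b j))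
        · rw [hNS1 x hx3, hNS1 _ (hS1π₁ x hx3), h₁.1]
        · obtain ⟨c1, c2, c3⟩ := hNout x hx1 hx2 hx3
          rw [hNelse x hx1 hx2 hx3, hNelse _ c1 c2 c3, h₂.1]
      · intro x
        rcases eq_or_ne x p with rfl | hx1
        · rw [hNp]; exact Ne.symm hd_pbk
        rcases eq_or_ne x (b k) with rfl | hx2
        · rw [hNbk]; exact hd_pbk
        by_cases hx3 : (∃ j, k + 1 ≤ j ∧ j < r ∧ (x = a j ∨ x = b j))
        · rw [hNS1 x hx3]; exact h₁.2 x
        · rw [hNelse x hx1 hx2 hx3]; exact h₂.2 x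
    -- evaluation of N'
    have hN'u : N' u = a (k+1) := by simp only [hN']; rw [if_pos trivial]
    have hN'ak : N' (a (k+1)) = u := by
      simp only [hN']; rw [if_neg (Ne.symm hd_uak), if_pos trivial]
    have hN'S2 : ∀ x, ((∃ j, k + 1 ≤ j ∧ j < r ∧ x = b j) ∨
        (∃ j, k + 2 ≤ j ∧ j ≤ r ∧ x = a j)) → N' x = π₂ x := by
      intro x hx
      have hx1 : x ≠ u := fun h => huS2 (h ▸ hx)
      have hx2 : x ≠ a (k+1) := fun h => hakS2 (h ▸ hx)
      simp only [hN']; rw [if_neg hx1, if_neg hx2, if_pos hx]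
    have hN'else : ∀ x, x ≠ u → x ≠ a (k+1) →
        ¬ ((∃ j, k + 1 ≤ j ∧ j < r ∧ x = b j) ∨ (∃ j, k + 2 ≤ j ∧ j ≤ r ∧ x = a j)) →
        N' x = π₁ x := by
      intro x h1 h2 h3
      simp only [hN']; rw [if_neg h1, if_neg h2, if_neg h3]
    have hS2π₂ : ∀ x, ((∃ j, k + 1 ≤ j ∧ j < r ∧ x = b j) ∨
        (∃ j, k + 2 ≤ j ∧ j ≤ r ∧ x = a j)) →
        ((∃ j, k + 1 ≤ j ∧ j < r ∧ π₂ x = b j) ∨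
          (∃ j, k + 2 ≤ j ∧ j ≤ r ∧ π₂ x = a j)) := by
      rintro x (⟨j, hj1, hj2, hj3⟩ | ⟨j, hj1, hj2, hj3⟩)
      · exact Or.inr ⟨j + 1, by omega, by omega, by rw [hj3, hπ₂b]⟩
      · obtain ⟨i, hieq⟩ : ∃ i, j = i + 1 := ⟨j - 1, by omega⟩
        exact Or.inl ⟨i, by omega, by omega, by rw [hj3, hieq, hπ₂a]⟩
    have hN'out : ∀ x, x ≠ u → x ≠ a (k+1) →
        ¬ ((∃ j, k + 1 ≤ j ∧ j < r ∧ x = b j) ∨ (∃ j, k + 2 ≤ j ∧ j ≤ r ∧ x = a j)) →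
        (π₁ x ≠ u ∧ π₁ x ≠ a (k+1) ∧
          ¬ ((∃ j, k + 1 ≤ j ∧ j < r ∧ π₁ x = b j) ∨
            (∃ j, k + 2 ≤ j ∧ j ≤ r ∧ π₁ x = a j))) := by
      intro x h1 h2 h3
      refine ⟨?_, ?_, ?_⟩
      · intro h
        have hx : x = π₁ u := by rw [← h, h₁.1]
        rw [hπ₁u] at hx
        exact h3 (Or.inr ⟨r, by omega, le_refl _, by rw [hx, aper]⟩)
      · intro h
        have hx : x = π₁ (a (k+1)) := by rw [← h, h₁.1]
        rw [hπ₁a] at hx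
        exact h3 (Or.inl ⟨k + 1, le_refl _, hk2, hx⟩)
      · rintro (⟨j, hj1, hj2, hj3⟩ | ⟨j, hj1, hj2, hj3⟩)
        · have hx : x = π₁ (b j) := by rw [← hj3, h₁.1]
          rw [hπ₁b] at hx
          rcases Nat.eq_or_lt_of_le hj1 with h' | h'
          · exact h2 (by rw [hx, ← h'])
          · exact h3 (Or.inr ⟨j, by omega, by omega, hx⟩)
        · have hx : x = π₁ (a j) := by rw [← hj3, h₁.1]
          rw [hπ₁a] at hx
          rcases Nat.eq_or_lt_of_le hj2 with h' | h'
          · rw [h'] at hx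
            have hbr : b r = u := by
              have h2 := congrArg π₁ aper
              rw [hpu] at h2
              exact h2
            exact h1 (hx.trans hbr)
          · exact h3 (Or.inl ⟨j, by omega, h', hx⟩)
    have hmN' : IsMatching N' := by
      constructor
      · intro x
        rcases eq_or_ne x u with rfl | hx1
        · rw [hN'u, hN'ak]
        rcases eq_or_ne x (a (k+1)) with rfl | hx2
        · rw [hN'ak, hN'u]
        by_cases hx3 : ((∃ j, k + 1 ≤ j ∧ j < r ∧ x = b j) ∨
            (∃ j, k + 2 ≤ j ∧ j ≤ r ∧ x = a j))
        · rw [hN'S2 x hx3, hN'S2 _ (hS2π₂ x hx3), h₂.1]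
        · obtain ⟨c1, c2, c3⟩ := hN'out x hx1 hx2 hx3
          rw [hN'else x hx1 hx2 hx3, hN'else _ c1 c2 c3, h₁.1]
      · intro x
        rcases eq_or_ne x u with rfl | hx1
        · rw [hN'u]; exact Ne.symm hd_uak
        rcases eq_or_ne x (a (k+1)) with rfl | hx2
        · rw [hN'ak]; exact hd_uak
        by_cases hx3 : ((∃ j, k + 1 ≤ j ∧ j < r ∧ x = b j) ∨
            (∃ j, k + 2 ≤ j ∧ j ≤ r ∧ x = a j))
        · rw [hN'S2 x hx3]; exact h₂.2 x
        · rw [hN'else x hx1 hx2 hx3]; exact h₁.2 x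
    -- pointwise identity away from the four special points
    have hKey : ∀ x, x ≠ p → x ≠ u → x ≠ b k → x ≠ a (k+1) →
        D x (N x) + D x (N' x) = D x (π₁ x) + D x (π₂ x) := by
      intro x hxp hxu hxbk hxak
      by_cases hx : (∃ j, k + 1 ≤ j ∧ j < r ∧ (x = a j ∨ x = b j))
      · -- then x ∈ S2 as well
        have hx2 : ((∃ j, k + 1 ≤ j ∧ j < r ∧ x = b j) ∨
            (∃ j, k + 2 ≤ j ∧ j ≤ r ∧ x = a j)) := by
          obtain ⟨j, hj1, hj2, hj3 | hj3⟩ := hx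
          · refine Or.inr ⟨j, ?_, by omega, hj3⟩
            rcases Nat.eq_or_lt_of_le hj1 with h' | h'
            · exact absurd (by rw [hj3, ← h']) hxak
            · omega
          · exact Or.inl ⟨j, hj1, hj2, hj3⟩
        rw [hNS1 x hx, hN'S2 x hx2]
      · have hx2 : ¬ ((∃ j, k + 1 ≤ j ∧ j < r ∧ x = b j) ∨
            (∃ j, k + 2 ≤ j ∧ j ≤ r ∧ x = a j)) := by
          rintro (⟨j, hj1, hj2, hj3⟩ | ⟨j, hj1, hj2, hj3⟩)
          · exact hx ⟨j, hj1, hj2, Or.inr hj3⟩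
          · rcases Nat.eq_or_lt_of_le hj2 with h' | h'
            · rw [h', aper] at hj3; exact hxp hj3
            · exact hx ⟨j, by omega, h', Or.inl hj3⟩
        rw [hNelse x hxp hxbk hx, hN'else x hxu hxak hx2]
        ring
    -- values of N, N' at the four special points
    have hN'p : N' p = π₂ p := hN'S2 p hpS2
    have hNu : N u = π₂ u := hNelse u (Ne.symm hd_pu) hd_ubk huS1
    have hN'bk : N' (b k) = π₁ (b k) := hN'else (b k) (Ne.symm hd_ubk) hd_bkak hbkS2
    have hNak : N (a (k+1)) = π₁ (a (k+1)) := hNS1 _ hakS1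
    -- the sum comparison
    have hout4 : ∀ x ∉ ({p, u, b k, a (k+1)} : Finset X),
        (D x (N x) + D x (N' x)) = (D x (π₁ x) + D x (π₂ x)) := by
      intro x hx
      simp only [Finset.mem_insert, Finset.mem_singleton, not_or] at hx
      exact hKey x hx.1 hx.2.1 hx.2.2.1 hx.2.2.2
    have hsum : (∑ x, (D x (N x) + D x (N' x))) = (∑ x, (D x (π₁ x) + D x (π₂ x))) +
        ∑ z ∈ ({p, u, b k, a (k+1)} : Finset X),
          ((D z (N z) + D z (N' z)) - (D z (π₁ z) + D z (π₂ z))) :=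
      sum_sub_support _ hout4
    have h4 : ∑ z ∈ ({p, u, b k, a (k+1)} : Finset X),
        ((D z (N z) + D z (N' z)) - (D z (π₁ z) + D z (π₂ z))) =
        ((D p (N p) + D p (N' p)) - (D p (π₁ p) + D p (π₂ p))) +
        ((D u (N u) + D u (N' u)) - (D u (π₁ u) + D u (π₂ u))) +
        ((D (b k) (N (b k)) + D (b k) (N' (b k))) - (D (b k) (π₁ (b k)) + D (b k) (π₂ (b k)))) +
        ((D (a (k+1)) (N (a (k+1))) + D (a (k+1)) (N' (a (k+1)))) -
          (D (a (k+1)) (π₁ (a (k+1))) + D (a (k+1)) (π₂ (a (k+1))))) :=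
      sum_four _ hd_pu hd_pbk hd_pak hd_ubk hd_uak hd_bkak
    rw [hNp, hN'p, hNu, hN'u, hNbk, hN'bk, hNak, hN'ak, hpu, hπ₁u, hπ₂b k, hπ₂a k] at h4
    -- identify b k / a(k+1) with q / v and bound
    have hQV : D p (b k) + D u (a (k+1)) - D p u - D (b k) (a (k+1)) < 0 := by
      rcases hcase with ⟨hq', hv'⟩ | ⟨hq', hv'⟩
      · rw [← hq', ← hv']
        have h1 := le_max_left (D p q + D u v) (D p v + D q u)
        linarith
      · rw [← hq', ← hv']
        have h1 := le_max_right (D p q + D u v) (D p v + D q u)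
        have h2 : D u q = D q u := hD.2.1 _ _
        have h3 : D v q = D q v := hD.2.1 _ _
        linarith
    have hNge := hall N hmN
    have hN'ge := hall N' hmN'
    have hNval : matchVal D N = (∑ x, D x (N x)) / 2 := rfl
    have hN'val : matchVal D N' = (∑ x, D x (N' x)) / 2 := rfl
    have h1val : matchVal D π₁ = (∑ x, D x (π₁ x)) / 2 := rfl
    have h2val : matchVal D π₂ = (∑ x, D x (π₂ x)) / 2 := rfl
    have hsplit1 : (∑ x, (D x (N x) + D x (N' x))) =
        (∑ x, D x (N x)) + (∑ x, D x (N' x)) := Finset.sum_add_distrib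
    have hsplit2 : (∑ x, (D x (π₁ x) + D x (π₂ x))) =
        (∑ x, D x (π₁ x)) + (∑ x, D x (π₂ x)) := Finset.sum_add_distrib
    have hsym1 : D (b k) p = D p (b k) := hD.2.1 _ _
    have hsym2 : D (a (k+1)) u = D u (a (k+1)) := hD.2.1 _ _
    have hsym3 : D u p = D p u := hD.2.1 _ _
    have hsym4 : D (a (k+1)) (b k) = D (b k) (a (k+1)) := hD.2.1 _ _
    rw [hsplit1, hsplit2] at hsum
    rw [hv₁] at h1val
    rw [hv₂] at h2val
    rw [hNval] at hNge
    rw [hN'val] at hN'ge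
    rw [h4] at hsum
    linarith
  · -- Case A : q not on the cycle of p
    have hvC : ¬ ∃ j, v = a j ∨ v = b j := by
      rintro ⟨j, hj⟩
      apply hqC
      have hq' : q = π₂ v := by rw [← hqv, h₂.1]
      rcases hj with h | h
      · rcases Nat.eq_zero_or_pos j with rfl | hjpos
        · rw [ha0] at h
          exact absurd h.symm hpv
        · obtain ⟨i, rfl⟩ : ∃ i, j = i + 1 := ⟨j - 1, by omega⟩
          exact ⟨i, Or.inr (by rw [hq', h, hπ₂a])⟩
      · exact ⟨j + 1, Or.inl (by rw [hq', h, hπ₂b])⟩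
    set π₃ : X → X := fun x => if (∃ j, x = a j ∨ x = b j) then π₁ x else π₂ x with hπ₃
    set π₄ : X → X := fun x => if (∃ j, x = a j ∨ x = b j) then π₂ x else π₁ x with hπ₄
    have hCπ₁ : ∀ x, (∃ j, x = a j ∨ x = b j) → (∃ j, π₁ x = a j ∨ π₁ x = b j) := by
      rintro x ⟨j, hj | hj⟩
      · exact ⟨j, Or.inr (by rw [hj])⟩
      · exact ⟨j, Or.inl (by rw [hj, hπ₁b])⟩
    have hCπ₂ : ∀ x, (∃ j, x = a j ∨ x = b j) → (∃ j, π₂ x = a j ∨ π₂ x = b j) := by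
      rintro x ⟨j, hj | hj⟩
      · rcases Nat.eq_zero_or_pos j with rfl | hjpos
        · rw [ha0] at hj
          exact ⟨r - 1, Or.inr (by rw [hj, hπ₂p])⟩
        · obtain ⟨i, rfl⟩ : ∃ i, j = i + 1 := ⟨j - 1, by omega⟩
          exact ⟨i, Or.inr (by rw [hj, hπ₂a])⟩
      · exact ⟨j + 1, Or.inl (by rw [hj, hπ₂b])⟩
    have hCπ₁' : ∀ x, ¬ (∃ j, x = a j ∨ x = b j) → ¬ (∃ j, π₁ x = a j ∨ π₁ x = b j) := by
      intro x hx h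
      apply hx
      have := hCπ₁ _ h
      rwa [h₁.1] at this
    have hCπ₂' : ∀ x, ¬ (∃ j, x = a j ∨ x = b j) → ¬ (∃ j, π₂ x = a j ∨ π₂ x = b j) := by
      intro x hx h
      apply hx
      have := hCπ₂ _ h
      rwa [h₂.1] at this
    have hm₃ : IsMatching π₃ := by
      constructor
      · intro x
        by_cases hx : (∃ j, x = a j ∨ x = b j)
        · simp only [hπ₃]
          rw [if_pos hx, if_pos (hCπ₁ x hx), h₁.1]
        · simp only [hπ₃]
          rw [if_neg hx, if_neg (hCπ₂' x hx), h₂.1]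
      · intro x
        by_cases hx : (∃ j, x = a j ∨ x = b j)
        · simp only [hπ₃]; rw [if_pos hx]; exact h₁.2 x
        · simp only [hπ₃]; rw [if_neg hx]; exact h₂.2 x
    have hm₄ : IsMatching π₄ := by
      constructor
      · intro x
        by_cases hx : (∃ j, x = a j ∨ x = b j)
        · simp only [hπ₄]
          rw [if_pos hx, if_pos (hCπ₂ x hx), h₂.1]
        · simp only [hπ₄]
          rw [if_neg hx, if_neg (hCπ₁' x hx), h₁.1]
      · intro x
        by_cases hx : (∃ j, x = a j ∨ x = b j)
        · simp only [hπ₄]; rw [if_pos hx]; exact h₂.2 x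
        · simp only [hπ₄]; rw [if_neg hx]; exact h₁.2 x
    have hsum34 : ∀ x, D x (π₃ x) + D x (π₄ x) = D x (π₁ x) + D x (π₂ x) := by
      intro x
      by_cases hx : (∃ j, x = a j ∨ x = b j)
      · simp only [hπ₃, hπ₄]; rw [if_pos hx, if_pos hx]
      · simp only [hπ₃, hπ₄]; rw [if_neg hx, if_neg hx]; ring
    have hvsum : matchVal D π₃ + matchVal D π₄ = 2 * m := by
      have e1 : (∑ x, (D x (π₃ x) + D x (π₄ x))) = ∑ x, (D x (π₁ x) + D x (π₂ x)) :=
        Finset.sum_congr rfl (fun x _ => hsum34 x)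
      have e2 : (∑ x, (D x (π₃ x) + D x (π₄ x))) =
          (∑ x, D x (π₃ x)) + (∑ x, D x (π₄ x)) := Finset.sum_add_distrib
      have e3 : (∑ x, (D x (π₁ x) + D x (π₂ x))) =
          (∑ x, D x (π₁ x)) + (∑ x, D x (π₂ x)) := Finset.sum_add_distrib
      have h1val : matchVal D π₁ = (∑ x, D x (π₁ x)) / 2 := rfl
      have h2val : matchVal D π₂ = (∑ x, D x (π₂ x)) / 2 := rfl
      have h3val : matchVal D π₃ = (∑ x, D x (π₃ x)) / 2 := rfl
      have h4val : matchVal D π₄ = (∑ x, D x (π₄ x)) / 2 := rfl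
      have hm1 : (∑ x, D x (π₁ x)) / 2 = m := by rw [← h1val, hv₁]
      have hm2 : (∑ x, D x (π₂ x)) / 2 = m := by rw [← h2val, hv₂]
      rw [h3val, h4val]
      linarith
    have hv₃ : matchVal D π₃ = m := by
      have t1 := hall π₃ hm₃
      have t2 := hall π₄ hm₄
      linarith
    have hπ₃p : π₃ p = u := by
      simp only [hπ₃]
      rw [if_pos ⟨0, Or.inl ha0.symm⟩, hpu]
    have hπ₃q : π₃ q = v := by
      simp only [hπ₃]
      rw [if_neg hqC, hqv]
    obtain ⟨π₅, hm₅, hval₅⟩ := rewire hD.2.1 hm₃ hπ₃p hπ₃q hpq hpv hqu huv hpune hqvne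
    have h5 := hall π₅ hm₅
    have hle : D p q + D u v ≤ max (D p q + D u v) (D p v + D q u) := le_max_left _ _
    rw [hval₅, hv₃] at h5
    linarith

end Cycle

section Decrease
variable {X : Type*} [Fintype X]

lemma decrease_step {D : X → X → ℝ} (hD : IsPseudometric D) {mstar : ℝ}
    (hval : ∀ π : X → X, IsMatching π → mstar ≤ matchVal D π)
    {p u : X} (hpu : 0 < D p u)
    (hnomatch : ¬ ∃ π : X → X, IsMatching π ∧ matchVal D π = mstar ∧
      ∃ x y, ((D p x = 0 ∧ D u y = 0) ∨ (D u x = 0 ∧ D p y = 0)) ∧ π x = y)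
    (hnoext : ¬ ∃ z, (D p z = D p u + D u z ∧ D u z ≠ 0) ∨
      (D u z = D u p + D p z ∧ D p z ≠ 0)) :
    ∃ D' : X → X → ℝ, IsPseudometric D' ∧ (∀ x y, D' x y ≤ D x y) ∧
      (∀ π : X → X, IsMatching π → mstar ≤ matchVal D' π) ∧
      (∑ x, ∑ y, D' x y) < (∑ x, ∑ y, D x y) := by
  classical
  set O : X → X → Prop := fun x y => (D p x = 0 ∧ D u y = 0) ∨ (D u x = 0 ∧ D p y = 0)
    with hO
  have htwin : ∀ {a x : X}, D a x = 0 → ∀ w, D x w = D a w :=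
    fun h w => (hD.twin h w).symm
  have hno2 : ∀ x, D p x = 0 → D u x = 0 → False := by
    intro x h1 h2
    have e : D p u = D x u := hD.twin h1 u
    rw [hD.2.1 x u, h2] at e
    linarith
  have hOval : ∀ x y, O x y → D x y = D p u := by
    intro x y hxy
    simp only [hO] at hxy
    rcases hxy with ⟨h1, h2⟩ | ⟨h1, h2⟩
    · rw [htwin h1 y, hD.2.1 p y, htwin h2 p, hD.2.1 u p]
    · rw [htwin h1 y, hD.2.1 u y, htwin h2 u]
  have hOne : ∀ x y, O x y → x ≠ y := by
    intro x y hxy h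
    have := hOval x y hxy
    rw [h, hD.1] at this
    linarith
  have hOsymm : ∀ x y, O x y → O y x := by
    intro x y hxy
    simp only [hO] at hxy ⊢
    rcases hxy with ⟨h1, h2⟩ | ⟨h1, h2⟩
    · exact Or.inr ⟨h2, h1⟩
    · exact Or.inl ⟨h2, h1⟩
  have hOpu : O p u := by
    simp only [hO]
    exact Or.inl ⟨hD.1 p, hD.1 u⟩
  set n : ℕ := Fintype.card X with hn
  set T1 : Finset (X × X × X) := Finset.univ.filter (fun t =>
      (O t.1 t.2.1 ∨ O t.2.1 t.2.2) ∧ ¬ O t.1 t.2.2) with hT1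
  set MS : Finset (X → X) := Finset.univ.filter
      (fun π => IsMatching π ∧ ∃ x, O x (π x)) with hMS
  have hslackpos : ∀ t ∈ T1, 0 < D t.1 t.2.1 + D t.2.1 t.2.2 - D t.1 t.2.2 := by
    rintro ⟨x, y, z⟩ ht
    rw [hT1, Finset.mem_filter] at ht
    obtain ⟨-, hor, hnxz⟩ := ht
    show 0 < D x y + D y z - D x z
    have htri := hD.2.2 x y z
    rcases lt_or_eq_of_le htri with h | h
    · linarith
    · exfalso
      apply hnoext
      simp only [hO] at hor hnxz
      rcases hor with (⟨h1, h2⟩ | ⟨h1, h2⟩) | (⟨h1, h2⟩ | ⟨h1, h2⟩)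
      · refine ⟨z, Or.inl ⟨?_, fun h0 => hnxz (Or.inl ⟨h1, h0⟩)⟩⟩
        have e1 : D x z = D p z := htwin h1 z
        have e2 : D x y = D p u := by
          rw [htwin h1 y, hD.2.1 p y, htwin h2 p, hD.2.1 u p]
        have e3 : D y z = D u z := htwin h2 z
        linarith
      · refine ⟨z, Or.inr ⟨?_, fun h0 => hnxz (Or.inr ⟨h1, h0⟩)⟩⟩
        have e1 : D x z = D u z := htwin h1 z
        have e2 : D x y = D u p := by
          rw [htwin h1 y, hD.2.1 u y, htwin h2 u, hD.2.1 p u]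
        have e3 : D y z = D p z := htwin h2 z
        linarith
      · refine ⟨x, Or.inr ⟨?_, fun h0 => hnxz (Or.inl ⟨h0, h2⟩)⟩⟩
        have e1 : D x z = D u x := by rw [hD.2.1 x z, htwin h2 x]
        have e2 : D x y = D p x := by rw [hD.2.1 x y, htwin h1 x]
        have e3 : D y z = D p u := by
          rw [htwin h1 z, hD.2.1 p z, htwin h2 p, hD.2.1 u p]
        have e4 : D u p = D p u := hD.2.1 u p
        linarith
      · refine ⟨x, Or.inl ⟨?_, fun h0 => hnxz (Or.inr ⟨h0, h2⟩)⟩⟩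
        have e1 : D x z = D p x := by rw [hD.2.1 x z, htwin h2 x]
        have e2 : D x y = D u x := by rw [hD.2.1 x y, htwin h1 x]
        have e3 : D y z = D u p := by
          rw [htwin h1 z, hD.2.1 u z, htwin h2 u, hD.2.1 p u]
        have e4 : D u p = D p u := hD.2.1 u p
        linarith
  have hMSpos : ∀ π ∈ MS, 0 < (matchVal D π - mstar) / (n + 1) := by
    intro π hπ
    rw [hMS, Finset.mem_filter] at hπ
    obtain ⟨-, hm, x, hx⟩ := hπ
    have h1 := hval π hm
    rcases lt_or_eq_of_le h1 with h | h
    · apply div_pos (by linarith)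
      positivity
    · exact absurd ⟨π, hm, h.symm, x, π x, hx, rfl⟩ hnomatch
  set εset : Finset ℝ := insert (D p u)
      ((T1.image (fun t => D t.1 t.2.1 + D t.2.1 t.2.2 - D t.1 t.2.2)) ∪
        (MS.image (fun π => (matchVal D π - mstar) / (n + 1)))) with hεset
  have hεne : εset.Nonempty := ⟨D p u, Finset.mem_insert_self _ _⟩
  set ε : ℝ := εset.min' hεne with hεdef
  have hεall : ∀ s ∈ εset, 0 < s := by
    intro s hs
    rw [hεset] at hs
    rcases Finset.mem_insert.mp hs with h | h
    · rw [h]; exact hpu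
    rcases Finset.mem_union.mp h with h | h
    · obtain ⟨t, ht, rfl⟩ := Finset.mem_image.mp h
      exact hslackpos t ht
    · obtain ⟨π, hπ, rfl⟩ := Finset.mem_image.mp h
      exact hMSpos π hπ
  have hεpos : 0 < ε := hεall ε (εset.min'_mem hεne)
  have hεle : ∀ s ∈ εset, ε ≤ s := fun s hs => Finset.min'_le _ _ hs
  have hεpu : ε ≤ D p u := hεle _ (Finset.mem_insert_self _ _)
  have hεslack : ∀ x y z, (O x y ∨ O y z) → ¬ O x z → ε ≤ D x y + D y z - D x z := by
    intro x y z h1 h2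
    apply hεle
    rw [hεset]
    apply Finset.mem_insert_of_mem
    apply Finset.mem_union_left
    apply Finset.mem_image.mpr
    refine ⟨(x, y, z), ?_, rfl⟩
    rw [hT1, Finset.mem_filter]
    exact ⟨Finset.mem_univ _, h1, h2⟩
  have hεmatch : ∀ π : X → X, IsMatching π → (∃ x, O x (π x)) →
      ε ≤ (matchVal D π - mstar) / (n + 1) := by
    intro π hm hx
    apply hεle
    rw [hεset]
    apply Finset.mem_insert_of_mem
    apply Finset.mem_union_right
    apply Finset.mem_image.mpr
    refine ⟨π, ?_, rfl⟩
    rw [hMS, Finset.mem_filter]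
    exact ⟨Finset.mem_univ _, hm, hx⟩
  set D' : X → X → ℝ := fun x y => if O x y then D x y - ε else D x y with hD'
  have hD'O : ∀ x y, O x y → D' x y = D x y - ε := by
    intro x y h; simp only [hD']; rw [if_pos h]
  have hD'n : ∀ x y, ¬ O x y → D' x y = D x y := by
    intro x y h; simp only [hD']; rw [if_neg h]
  have hD'le : ∀ x y, D' x y ≤ D x y := by
    intro x y
    by_cases h : O x y
    · rw [hD'O x y h]; linarith
    · rw [hD'n x y h]
  refine ⟨D', ⟨?_, ?_, ?_⟩, hD'le, ?_, ?_⟩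
  · -- reflexivity
    intro x
    rw [hD'n x x (fun h => hOne x x h rfl), hD.1]
  · -- symmetry
    intro x y
    by_cases h : O x y
    · rw [hD'O x y h, hD'O y x (hOsymm x y h), hD.2.1]
    · rw [hD'n x y h, hD'n y x (fun h' => h (hOsymm y x h')), hD.2.1]
  · -- triangle
    intro x y z
    have htri := hD.2.2 x y z
    by_cases hxz : O x z
    · rw [hD'O x z hxz]
      by_cases hxy : O x y
      · -- y and z on the same side: D y z = 0
        have hyz0 : D y z = 0 := by
          simp only [hO] at hxz hxy
          rcases hxz with ⟨h1, h2⟩ | ⟨h1, h2⟩ <;>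
            rcases hxy with ⟨g1, g2⟩ | ⟨g1, g2⟩
          · rw [htwin g2 z]; exact h2
          · exact (hno2 x h1 g1).elim
          · exact (hno2 x g1 h1).elim
          · rw [htwin g2 z]; exact h2
        have hnyz : ¬ O y z := fun h => by
          have := hOval y z h; rw [hyz0] at this; linarith
        rw [hD'O x y hxy, hD'n y z hnyz, hyz0]
        have e1 := hOval x z hxz
        have e2 := hOval x y hxy
        linarith
      · by_cases hyz : O y z
        · have hxy0 : D x y = 0 := by
            simp only [hO] at hxz hyz
            rcases hxz with ⟨h1, h2⟩ | ⟨h1, h2⟩ <;>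
              rcases hyz with ⟨g1, g2⟩ | ⟨g1, g2⟩
            · rw [htwin h1 y]; exact g1
            · exact (hno2 z g2 h2).elim
            · exact (hno2 z h2 g2).elim
            · rw [htwin h1 y]; exact g1
          rw [hD'n x y hxy, hD'O y z hyz, hxy0]
          have e1 := hOval x z hxz
          have e2 := hOval y z hyz
          linarith
        · rw [hD'n x y hxy, hD'n y z hyz]
          linarith
    · rw [hD'n x z hxz]
      by_cases hxy : O x y
      · by_cases hyz : O y z
        · -- x and z on same side: D x z = 0
          have hxz0 : D x z = 0 := by
            simp only [hO] at hxy hyz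
            rcases hxy with ⟨h1, h2⟩ | ⟨h1, h2⟩ <;>
              rcases hyz with ⟨g1, g2⟩ | ⟨g1, g2⟩
            · exact (hno2 y g1 h2).elim
            · rw [htwin h1 z]; exact g2
            · rw [htwin h1 z]; exact g2
            · exact (hno2 y h2 g1).elim
          rw [hD'O x y hxy, hD'O y z hyz]
          have e1 := hOval x y hxy
          have e2 := hOval y z hyz
          rw [hxz0] at htri ⊢
          linarith
        · rw [hD'O x y hxy, hD'n y z hyz]
          have := hεslack x y z (Or.inl hxy) hxz
          linarith
      · by_cases hyz : O y z
        · rw [hD'n x y hxy, hD'O y z hyz]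
          have := hεslack x y z (Or.inr hyz) hxz
          linarith
        · rw [hD'n x y hxy, hD'n y z hyz]
          linarith
  · -- matching values stay above mstar
    intro π hπ
    have hpt : ∀ x, D' x (π x) = D x (π x) - (if O x (π x) then ε else 0) := by
      intro x
      by_cases h : O x (π x)
      · rw [hD'O _ _ h, if_pos h]
      · rw [hD'n _ _ h, if_neg h]; ring
    have hs1 : (∑ x, D' x (π x)) =
        (∑ x, D x (π x)) - ∑ x, (if O x (π x) then ε else 0) := by
      rw [← Finset.sum_sub_distrib]
      exact Finset.sum_congr rfl fun x _ => hpt x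
    have hs2 : (∑ x, (if O x (π x) then ε else 0)) =
        ((Finset.univ.filter (fun x => O x (π x))).card : ℝ) * ε := by
      rw [← Finset.sum_filter, Finset.sum_const, nsmul_eq_mul]
    by_cases hc : ∃ x, O x (π x)
    · have hεm := hεmatch π hπ hc
      have hcard : ((Finset.univ.filter (fun x => O x (π x))).card : ℝ) ≤ (n : ℝ) := by
        rw [hn]
        exact_mod_cast Finset.card_filter_le _ _
      have hcard0 : (0 : ℝ) ≤ ((Finset.univ.filter (fun x => O x (π x))).card : ℝ) :=
        Nat.cast_nonneg _
      have hprod : ((Finset.univ.filter (fun x => O x (π x))).card : ℝ) * ε ≤ (n : ℝ) * ε :=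
        mul_le_mul_of_nonneg_right hcard (le_of_lt hεpos)
      have hεm2 : ε * ((n : ℝ) + 1) ≤ matchVal D π - mstar :=
        (le_div_iff₀ (by positivity)).mp hεm
      have hval' : matchVal D' π = matchVal D π -
          ((Finset.univ.filter (fun x => O x (π x))).card : ℝ) * ε / 2 := by
        show (∑ x, D' x (π x)) / 2 = (∑ x, D x (π x)) / 2 - _
        rw [hs1, hs2]
        ring
      rw [hval']
      nlinarith [hεpos, mul_nonneg hcard0 hεpos.le]
    · have hzero : (Finset.univ.filter (fun x => O x (π x))) = ∅ := by
        apply Finset.filter_eq_empty_iff.mpr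
        intro x _
        exact fun h => hc ⟨x, h⟩
      have hval' : matchVal D' π = matchVal D π := by
        show (∑ x, D' x (π x)) / 2 = (∑ x, D x (π x)) / 2
        rw [hs1, hs2, hzero]
        simp
      rw [hval']
      exact hval π hπ
  · -- strict decrease of the total sum
    apply Finset.sum_lt_sum
    · intro x _
      exact Finset.sum_le_sum fun y _ => hD'le x y
    · refine ⟨p, Finset.mem_univ p, ?_⟩
      apply Finset.sum_lt_sum
      · intro y _; exact hD'le p y
      · refine ⟨u, Finset.mem_univ u, ?_⟩
        rw [hD'O p u hOpu]
        linarith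

end Decrease

section MainRigidity
variable {X : Type*} [Fintype X]

lemma bad_pos {D : X → X → ℝ} (hD : IsPseudometric D) {p q u v : X}
    (hbad : max (D p q + D u v) (D p v + D q u) < D p u + D q v) :
    0 < D p q ∧ 0 < D u v ∧ 0 < D p v ∧ 0 < D q u ∧ 0 < D p u ∧ 0 < D q v := by
  have hsym := hD.2.1
  have h1 := le_max_left (D p q + D u v) (D p v + D q u)
  have h2 := le_max_right (D p q + D u v) (D p v + D q u)
  refine ⟨?_, ?_, ?_, ?_, ?_, ?_⟩
  · rcases lt_or_eq_of_le (hD.nonneg p q) with h | h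
    · exact h
    exfalso
    have t1 : D q v = D p v := (hD.twin h.symm v).symm
    have t2 : D q u = D p u := (hD.twin h.symm u).symm
    linarith
  · rcases lt_or_eq_of_le (hD.nonneg u v) with h | h
    · exact h
    exfalso
    have t1 : D p v = D p u := by
      rw [hsym p v, ← hD.twin h.symm p, hsym u p]
    have t2 : D q u = D q v := by
      rw [hsym q u, hD.twin h.symm q, hsym v q]
    linarith
  · rcases lt_or_eq_of_le (hD.nonneg p v) with h | h
    · exact h
    exfalso
    have t1 : D p q = D q v := by
      rw [hD.twin h.symm q, hsym v q]
    have t2 : D u v = D p u := by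
      rw [hsym u v, ← hD.twin h.symm u, hsym p u]
    linarith
  · rcases lt_or_eq_of_le (hD.nonneg q u) with h | h
    · exact h
    exfalso
    have t1 : D p q = D p u := by
      rw [hsym p q, hD.twin h.symm p, hsym u p]
    have t2 : D u v = D q v := by
      rw [← hD.twin h.symm v]
    linarith
  · rcases lt_or_eq_of_le (hD.nonneg p u) with h | h
    · exact h
    exfalso
    have t1 : D u v = D p v := (hD.twin h.symm v).symm
    have t2 : D q v ≤ D q p + D p v := hD.2.2 q p v
    have t3 : D q p = D p q := hsym q p
    linarith
  · rcases lt_or_eq_of_le (hD.nonneg q v) with h | h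
    · exact h
    exfalso
    have t1 : D u v = D u q := by
      rw [hsym u v, ← hD.twin h.symm u, hsym q u]
    have t2 : D p u ≤ D p q + D q u := hD.2.2 p q u
    have t3 : D u q = D q u := hsym u q
    linarith

lemma main_rigidity {D : X → X → ℝ} (hD : IsPseudometric D) {mstar : ℝ}
    (hval : ∀ π : X → X, IsMatching π → mstar ≤ matchVal D π)
    (hnfp : ¬ FourPoint D) :
    ∃ D' : X → X → ℝ, IsPseudometric D' ∧ (∀ x y, D' x y ≤ D x y) ∧
      (∀ π : X → X, IsMatching π → mstar ≤ matchVal D' π) ∧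
      (∑ x, ∑ y, D' x y) < (∑ x, ∑ y, D x y) := by
  classical
  have hBadne : ∃ t : X × X × X × X,
      max (D t.1 t.2.1 + D t.2.2.1 t.2.2.2) (D t.1 t.2.2.2 + D t.2.1 t.2.2.1) <
        D t.1 t.2.2.1 + D t.2.1 t.2.2.2 := by
    unfold FourPoint at hnfp
    push_neg at hnfp
    obtain ⟨x1, x2, x3, x4, h⟩ := hnfp
    exact ⟨(x1, x2, x3, x4), h⟩
  set Bad : Finset (X × X × X × X) := Finset.univ.filter (fun t =>
      max (D t.1 t.2.1 + D t.2.2.1 t.2.2.2) (D t.1 t.2.2.2 + D t.2.1 t.2.2.1) <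
        D t.1 t.2.2.1 + D t.2.1 t.2.2.2) with hBadDef
  have hne : Bad.Nonempty := by
    obtain ⟨t, ht⟩ := hBadne
    exact ⟨t, by rw [hBadDef, Finset.mem_filter]; exact ⟨Finset.mem_univ _, ht⟩⟩
  obtain ⟨t, htmem, htmax⟩ := Bad.exists_max_image
      (fun t => D t.1 t.2.2.1 + D t.2.1 t.2.2.2) hne
  obtain ⟨p, q, u, v⟩ := t
  rw [hBadDef, Finset.mem_filter] at htmem
  have hbad : max (D p q + D u v) (D p v + D q u) < D p u + D q v := htmem.2
  have hmax : ∀ p' q' u' v' : X,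
      max (D p' q' + D u' v') (D p' v' + D q' u') < D p' u' + D q' v' →
      D p' u' + D q' v' ≤ D p u + D q v := by
    intro p' q' u' v' h
    exact htmax (p', q', u', v')
      (by rw [hBadDef, Finset.mem_filter]; exact ⟨Finset.mem_univ _, h⟩)
  obtain ⟨hDpq, hDuv, hDpv, hDqu, hDpu, hDqv⟩ := bad_pos hD hbad
  have hsym := hD.2.1
  have htri := hD.2.2
  have h1 := le_max_left (D p q + D u v) (D p v + D q u)
  have h2 := le_max_right (D p q + D u v) (D p v + D q u)
  have hE1 : ¬ ∃ z, (D p z = D p u + D u z ∧ D u z ≠ 0) ∨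
      (D u z = D u p + D p z ∧ D p z ≠ 0) := by
    rintro ⟨z, ⟨hz, hz0⟩ | ⟨hz, hz0⟩⟩
    · have hz0' : 0 < D u z := lt_of_le_of_ne (hD.nonneg u z) (Ne.symm hz0)
      have hb1 : D p q + D z v < D p z + D q v := by
        linarith [htri z u v, hsym z u]
      have hb2 : D p v + D q z < D p z + D q v := by
        linarith [htri q u z]
      linarith [hmax p q z v (max_lt hb1 hb2)]
    · have hz0' : 0 < D p z := lt_of_le_of_ne (hD.nonneg p z) (Ne.symm hz0)
      have hzu : D z u = D u p + D p z := by rw [hsym z u]; exact hz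
      have hb1 : D z q + D u v < D z u + D q v := by
        linarith [htri z p q, hsym z p, hsym u p]
      have hb2 : D z v + D q u < D z u + D q v := by
        linarith [htri z p v, hsym z p, hsym u p]
      linarith [hmax z q u v (max_lt hb1 hb2), hsym u p]
  have hE2 : ¬ ∃ z, (D q z = D q v + D v z ∧ D v z ≠ 0) ∨
      (D v z = D v q + D q z ∧ D q z ≠ 0) := by
    rintro ⟨z, ⟨hz, hz0⟩ | ⟨hz, hz0⟩⟩
    · have hz0' : 0 < D v z := lt_of_le_of_ne (hD.nonneg v z) (Ne.symm hz0)
      have hb1 : D p q + D u z < D p u + D q z := by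
        linarith [htri u v z]
      have hb2 : D p z + D q u < D p u + D q z := by
        linarith [htri p v z]
      linarith [hmax p q u z (max_lt hb1 hb2)]
    · have hz0' : 0 < D q z := lt_of_le_of_ne (hD.nonneg q z) (Ne.symm hz0)
      have hzv : D z v = D q v + D q z := by
        rw [hsym z v, hz, hsym v q]
      have hb1 : D p z + D u v < D p u + D z v := by
        linarith [htri p q z]
      have hb2 : D p v + D z u < D p u + D z v := by
        linarith [htri z q u, hsym z q]
      linarith [hmax p z u v (max_lt hb1 hb2)]
  by_cases hB1 : ∃ π : X → X, IsMatching π ∧ matchVal D π = mstar ∧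
      ∃ x y, ((D p x = 0 ∧ D u y = 0) ∨ (D u x = 0 ∧ D p y = 0)) ∧ π x = y
  · by_cases hB2 : ∃ π : X → X, IsMatching π ∧ matchVal D π = mstar ∧
        ∃ x y, ((D q x = 0 ∧ D v y = 0) ∨ (D v x = 0 ∧ D q y = 0)) ∧ π x = y
    · exfalso
      obtain ⟨π₁', hm1, hval1, x, y, hxy, hπxy⟩ := hB1
      have hpu0 : D p u ≠ 0 := ne_of_gt hDpu
      obtain ⟨π₁, hm₁, hv₁, hπ₁p⟩ : ∃ π', IsMatching π' ∧ matchVal D π' = mstar ∧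
          π' p = u := by
        rcases hxy with ⟨ha1, ha2⟩ | ⟨ha1, ha2⟩
        · obtain ⟨π', a1, a2, a3⟩ := exists_matching_through_pair hD hm1 hπxy ha1 ha2 hpu0
          exact ⟨π', a1, by rw [a2, hval1], a3⟩
        · have hyx : π₁' y = x := by rw [← hπxy, hm1.1]
          obtain ⟨π', a1, a2, a3⟩ := exists_matching_through_pair hD hm1 hyx ha2 ha1 hpu0
          exact ⟨π', a1, by rw [a2, hval1], a3⟩
      obtain ⟨π₂', hm2, hval2, x2, y2, hxy2, hπxy2⟩ := hB2
      have hqv0 : D q v ≠ 0 := ne_of_gt hDqv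
      obtain ⟨π₂, hm₂, hv₂, hπ₂q⟩ : ∃ π', IsMatching π' ∧ matchVal D π' = mstar ∧
          π' q = v := by
        rcases hxy2 with ⟨ha1, ha2⟩ | ⟨ha1, ha2⟩
        · obtain ⟨π', a1, a2, a3⟩ := exists_matching_through_pair hD hm2 hπxy2 ha1 ha2 hqv0
          exact ⟨π', a1, by rw [a2, hval2], a3⟩
        · have hyx : π₂' y2 = x2 := by rw [← hπxy2, hm2.1]
          obtain ⟨π', a1, a2, a3⟩ := exists_matching_through_pair hD hm2 hyx ha2 ha1 hqv0
          exact ⟨π', a1, by rw [a2, hval2], a3⟩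
      have hpq' : p ≠ q := fun h => by rw [h, hD.1] at hDpq; exact lt_irrefl _ hDpq
      have hpv' : p ≠ v := fun h => by rw [h, hD.1] at hDpv; exact lt_irrefl _ hDpv
      have hqu' : q ≠ u := fun h => by rw [h, hD.1] at hDqu; exact lt_irrefl _ hDqu
      have huv' : u ≠ v := fun h => by rw [h, hD.1] at hDuv; exact lt_irrefl _ hDuv
      have hpu' : p ≠ u := fun h => by rw [h, hD.1] at hDpu; exact lt_irrefl _ hDpu
      have hqv' : q ≠ v := fun h => by rw [h, hD.1] at hDqv; exact lt_irrefl _ hDqv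
      exact cycle_lemma hD hval hm₁ hm₂ hv₁ hv₂ hπ₁p hπ₂q hbad hpq' hpv' hqu' huv' hpu' hqv'
    · exact decrease_step hD hval hDqv hB2 hE2
  · exact decrease_step hD hval hDpu hB1 hE1

end MainRigidity

theorem stmt0 {X : Type*} [Fintype X] (hX : Even (Fintype.card X))
    (d : X → X → ℝ) (hd : IsPseudometric d) :
    ∃ D : X → X → ℝ, IsPseudometric D ∧ FourPoint D ∧
      (∀ x y, D x y ≤ d x y) ∧ matchNum D = matchNum d := by
  classical
  obtain ⟨π₀, hπ₀, hπ₀val⟩ := matchNum_attained hX d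
  set mstar : ℝ := matchNum d with hmstar
  set K : Set (X → X → ℝ) := {E | IsPseudometric E ∧ (∀ x y, E x y ≤ d x y) ∧
    ∀ π : X → X, IsMatching π → mstar ≤ matchVal E π} with hK
  have hdK : d ∈ K := ⟨hd, fun x y => le_refl _, fun π hπ => matchNum_le hπ⟩
  have hcont : ∀ (x y : X), Continuous fun E : X → X → ℝ => E x y :=
    fun x y => (continuous_apply y).comp (continuous_apply x)
  have c1 : IsClosed {E : X → X → ℝ | IsPseudometric E} := by
    have heq : {E : X → X → ℝ | IsPseudometric E} =
        (⋂ x, {E : X → X → ℝ | E x x = 0}) ∩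
        ((⋂ x, ⋂ y, {E : X → X → ℝ | E x y = E y x}) ∩
          (⋂ x, ⋂ y, ⋂ z, {E : X → X → ℝ | E x z ≤ E x y + E y z})) := by
      ext E
      simp only [Set.mem_setOf_eq, Set.mem_inter_iff, Set.mem_iInter]
      rfl
    rw [heq]
    refine IsClosed.inter ?_ (IsClosed.inter ?_ ?_)
    · exact isClosed_iInter fun x => isClosed_eq (hcont x x) continuous_const
    · exact isClosed_iInter fun x => isClosed_iInter fun y =>
        isClosed_eq (hcont x y) (hcont y x)
    · exact isClosed_iInter fun x => isClosed_iInter fun y => isClosed_iInter fun z =>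
        isClosed_le (hcont x z) ((hcont x y).add (hcont y z))
  have c2 : IsClosed {E : X → X → ℝ | ∀ x y, E x y ≤ d x y} := by
    have heq : {E : X → X → ℝ | ∀ x y, E x y ≤ d x y} =
        ⋂ x, ⋂ y, {E : X → X → ℝ | E x y ≤ d x y} := by
      ext E
      simp only [Set.mem_setOf_eq, Set.mem_iInter]
    rw [heq]
    exact isClosed_iInter fun x => isClosed_iInter fun y =>
      isClosed_le (hcont x y) continuous_const
  have c3 : IsClosed {E : X → X → ℝ | ∀ π : X → X, IsMatching π → mstar ≤ matchVal E π} := by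
    have heq : {E : X → X → ℝ | ∀ π : X → X, IsMatching π → mstar ≤ matchVal E π} =
        ⋂ π : X → X, ⋂ (_ : IsMatching π), {E : X → X → ℝ | mstar ≤ matchVal E π} := by
      ext E
      simp only [Set.mem_setOf_eq, Set.mem_iInter]
    rw [heq]
    refine isClosed_iInter fun π => isClosed_iInter fun _ => ?_
    have hc : Continuous fun E : X → X → ℝ => matchVal E π := by
      unfold matchVal
      exact Continuous.div_const (continuous_finset_sum _ fun x _ => hcont x (π x)) 2
    exact isClosed_le continuous_const hc
  have hKclosed : IsClosed K := by
    have hKeq : K = {E : X → X → ℝ | IsPseudometric E} ∩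
        ({E : X → X → ℝ | ∀ x y, E x y ≤ d x y} ∩
          {E : X → X → ℝ | ∀ π : X → X, IsMatching π → mstar ≤ matchVal E π}) := by
      rw [hK]
      ext E
      simp only [Set.mem_setOf_eq, Set.mem_inter_iff]
    rw [hKeq]
    exact c1.inter (c2.inter c3)
  have hKsub : K ⊆ Set.Icc (fun _ _ => (0 : ℝ)) d := by
    rintro E ⟨hps, hle', -⟩
    constructor
    · intro x
      intro y
      exact hps.nonneg x y
    · intro x
      intro y
      exact hle' x y
  have hKcompact : IsCompact K :=
    IsCompact.of_isClosed_subset isCompact_Icc hKclosed hKsub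
  have hFcont : Continuous (fun E : X → X → ℝ => ∑ x, ∑ y, E x y) :=
    continuous_finset_sum _ fun x _ => continuous_finset_sum _ fun y _ => hcont x y
  obtain ⟨Dstar, hDstarK, hmin⟩ := hKcompact.exists_isMinOn ⟨d, hdK⟩ hFcont.continuousOn
  obtain ⟨hps, hle, hmval⟩ := hDstarK
  have hfp : FourPoint Dstar := by
    by_contra hnfp
    obtain ⟨D', h1, h2, h3, h4⟩ := main_rigidity hps hmval hnfp
    have hD'K : D' ∈ K := ⟨h1, fun x y => le_trans (h2 x y) (hle x y), h3⟩
    have hge := (isMinOn_iff.mp hmin) D' hD'K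
    linarith
  refine ⟨Dstar, hps, hfp, hle, ?_⟩
  apply le_antisymm
  · calc matchNum Dstar ≤ matchVal Dstar π₀ := matchNum_le hπ₀
    _ ≤ matchVal d π₀ := matchVal_mono hle π₀
    _ = matchNum d := hπ₀val.symm
  · exact le_matchNum hX (fun π hπ => hmval π hπ)
end

section
/- Let (X,d) be a metric space of cardinality 2n and let Π = {{x_1^+,…,x_n^+},{x_1^-,…,x_n^-}} be a partition of X into two n-tuples of points. Then min over permutations σ of {1,…,n} of ∑_{i=1}^n d(x_i^+, x_{σ(i)}^-) equals max over all 1-Lipschitz functions f : X → ℝ of ∑_{i=1}^n (f(x_i^+) − f(x_i^-)), and this maximum is attained by some 1-Lipschitz function f : X → ℝ. -/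
/-! Weak duality is the Lipschitz bound applied termwise, after reindexing the `x⁻` by `σ`.
Conversely, fix an optimal `σ₀` and put `y i = x⁻ (σ₀ i)`. Optimality says that the reduced costs
`w i j = d(x⁺ i, y j) - d(x⁺ i, y i)` have nonnegative total along every permutation, hence along
every simple cycle, so the least weight `u i` of a simple path starting at `i` is a potential:
`u i ≤ u j + w i j`. Then `f x = min_j (d(x, y j) + u j)` is 1-Lipschitz with `f (y i) ≤ u i` and
`f (x⁺ i) = d(x⁺ i, y i) + u i`, so `f` attains the optimal cost. -/

open Finset

theorem List.map_formPerm_eq_rotate_one {α : Type*} [DecidableEq α] {l : List α}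
    (hl : l.Nodup) : l.map l.formPerm = l.rotate 1 :=
  List.ext_getElem (by simp) fun k hk _ => by
    simp only [List.getElem_map, List.getElem_rotate]
    exact List.formPerm_apply_getElem l hl k (by simpa using hk)

theorem List.setOf_nodup_finite {α : Type*} [Finite α] : {l : List α | l.Nodup}.Finite := by
  have := Fintype.ofFinite α
  exact Set.finite_coe_iff.mp (inferInstanceAs (Finite {l : List α // l.Nodup}))

section ShortestPaths

variable {ι : Type*} (w : ι → ι → ℝ)

def walkWeight : List ι → ℝ
  | a :: b :: l => w a b + walkWeight (b :: l)
  | _ => 0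

theorem walkWeight_eq_sum_zipWith (l : List ι) :
    walkWeight w l = (List.zipWith w l l.tail).sum := by
  induction l with
  | nil => rfl
  | cons a l ih => cases l <;> simp_all [walkWeight]

theorem walkWeight_append_cons (l₁ : List ι) (a : ι) (l₂ : List ι) :
    walkWeight w (l₁ ++ a :: l₂) = walkWeight w (l₁ ++ [a]) + walkWeight w (a :: l₂) := by
  induction l₁ with
  | nil => simp [walkWeight]
  | cons b l₁ ih => cases l₁ <;> simp_all [walkWeight, add_assoc]

variable {w}

theorem sum_apply_formPerm [Fintype ι] [DecidableEq ι] (hdiag : ∀ i, w i i = 0)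
    {l : List ι} (hl : l.Nodup) :
    ∑ i, w i (l.formPerm i) = (List.zipWith w l (l.rotate 1)).sum := by
  rw [← Finset.sum_subset (Finset.subset_univ l.toFinset), List.sum_toFinset _ hl,
    ← List.map_formPerm_eq_rotate_one hl, List.zipWith_map_right, List.zipWith_self]
  intro i _ hi
  rw [List.formPerm_apply_of_notMem (by simpa using hi), hdiag]

theorem walkWeight_cycle_nonneg [Fintype ι] (hdiag : ∀ i, w i i = 0)
    (hperm : ∀ σ : Equiv.Perm ι, 0 ≤ ∑ i, w i (σ i)) {a : ι} {l : List ι}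
    (hl : (a :: l).Nodup) : 0 ≤ walkWeight w (a :: l ++ [a]) := by
  classical
  have hlen : (a :: l).length = (l ++ [a]).length := by simp
  calc (0 : ℝ) ≤ ∑ i, w i ((a :: l).formPerm i) := hperm _
    _ = walkWeight w (a :: l ++ [a]) := by
      rw [sum_apply_formPerm hdiag hl, walkWeight_eq_sum_zipWith, List.rotate_cons_succ,
        List.rotate_zero, List.cons_append, List.tail_cons, ← List.cons_append]
      nth_rw 2 [← List.append_nil (l ++ [a])]
      rw [List.zipWith_append hlen, List.zipWith_nil_right, List.append_nil]

theorem exists_nodup_walk_cons_le [Fintype ι] (hdiag : ∀ i, w i i = 0)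
    (hperm : ∀ σ : Equiv.Perm ι, 0 ≤ ∑ i, w i (σ i)) (i j : ι) {p : List ι}
    (hp : p.Nodup) (hpj : p.head? = some j) :
    ∃ q : List ι, q.Nodup ∧ q.head? = some i ∧ walkWeight w q ≤ w i j + walkWeight w p := by
  obtain ⟨p, rfl⟩ : ∃ p', p = j :: p' := by cases p <;> simp_all
  by_cases hi : i ∈ j :: p
  -- Cut `j :: p` at `i`: the discarded part closes up with the edge `i → j` to a simple cycle.
  · obtain ⟨p₁, p₂, hsplit⟩ := List.append_of_mem hi
    rw [hsplit, List.nodup_append] at hp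
    refine ⟨i :: p₂, hp.2.1, rfl, ?_⟩
    rw [hsplit, walkWeight_append_cons]
    suffices 0 ≤ w i j + walkWeight w (p₁ ++ [i]) by linarith
    cases p₁ with
    | nil =>
      obtain ⟨rfl, -⟩ : j = i ∧ p = p₂ := by simpa using hsplit
      simp [walkWeight, hdiag]
    | cons k t =>
      obtain rfl : k = j := (List.cons_eq_cons.mp hsplit.symm).1
      have hcyc : (i :: k :: t).Nodup :=
        List.nodup_cons.mpr ⟨fun h => hp.2.2 i h i (by simp) rfl, hp.1⟩
      simpa [walkWeight] using walkWeight_cycle_nonneg hdiag hperm hcyc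
  · exact ⟨i :: j :: p, List.nodup_cons.mpr ⟨hi, hp⟩, rfl, by simp [walkWeight]⟩

theorem exists_potential_of_sum_nonneg [Fintype ι] (hdiag : ∀ i, w i i = 0)
    (hperm : ∀ σ : Equiv.Perm ι, 0 ≤ ∑ i, w i (σ i)) :
    ∃ u : ι → ℝ, ∀ i j, u i ≤ u j + w i j := by
  have hmin (i : ι) : ∃ p ∈ {p : List ι | p.Nodup ∧ p.head? = some i},
      ∀ q ∈ {q : List ι | q.Nodup ∧ q.head? = some i}, walkWeight w p ≤ walkWeight w q :=
    Set.exists_min_image _ _ (List.setOf_nodup_finite.subset fun _ hq => hq.1)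
      ⟨[i], List.nodup_singleton i, rfl⟩
  choose p hp hpmin using hmin
  refine ⟨fun i => walkWeight w (p i), fun i j => ?_⟩
  obtain ⟨q, hq, hqi, hqle⟩ := exists_nodup_walk_cons_le hdiag hperm i j (hp j).1 (hp j).2
  linarith [hpmin i q ⟨hq, hqi⟩]

end ShortestPaths

section Kantorovich

variable {X : Type*} [PseudoMetricSpace X]

theorem LipschitzWith.ciInf_of_finite {ι : Type*} [Finite ι] {g : ι → X → ℝ}
    (hg : ∀ j, LipschitzWith 1 (g j)) : LipschitzWith 1 fun x => ⨅ j, g j x := by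
  refine LipschitzWith.of_le_add fun x y => ?_
  rcases isEmpty_or_nonempty ι with _ | _
  · simp [Real.iInf_of_isEmpty]
  obtain ⟨j, hj⟩ := exists_eq_ciInf_of_finite (f := fun j => g j y)
  calc ⨅ j, g j x ≤ g j x := ciInf_le (Finite.bddBelow_range _) j
    _ ≤ g j y + dist x y := by simpa using (hg j).le_add_mul x y
    _ = (⨅ j, g j y) + dist x y := by rw [hj]

variable {ι : Type*} [Fintype ι]

theorem sum_sub_le_sum_dist_of_lipschitzWith {f : X → ℝ} (hf : LipschitzWith 1 f)
    (xp xm : ι → X) (σ : Equiv.Perm ι) :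
    ∑ i, (f (xp i) - f (xm i)) ≤ ∑ i, dist (xp i) (xm (σ i)) :=
  calc ∑ i, (f (xp i) - f (xm i)) = ∑ i, (f (xp i) - f (xm (σ i))) := by
        rw [sum_sub_distrib, sum_sub_distrib, Equiv.sum_comp σ fun i => f (xm i)]
    _ ≤ ∑ i, dist (xp i) (xm (σ i)) := sum_le_sum fun i _ => by
        linarith [by simpa using hf.le_add_mul (xp i) (xm (σ i))]

theorem exists_lipschitzWith_dist_le_sub (xp ym : ι → X)
    (hopt : ∀ σ : Equiv.Perm ι, ∑ i, dist (xp i) (ym i) ≤ ∑ i, dist (xp i) (ym (σ i))) :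
    ∃ f : X → ℝ, LipschitzWith 1 f ∧ ∀ i, dist (xp i) (ym i) ≤ f (xp i) - f (ym i) := by
  obtain ⟨u, hu⟩ := exists_potential_of_sum_nonneg
    (w := fun i j => dist (xp i) (ym j) - dist (xp i) (ym i)) (by simp)
    (fun σ => by simpa [sum_sub_distrib] using hopt σ)
  refine ⟨fun x => ⨅ j, (dist x (ym j) + u j),
    LipschitzWith.ciInf_of_finite fun j => by
      simpa using (LipschitzWith.dist_left (ym j)).add (LipschitzWith.const (u j)),
    fun i => ?_⟩
  have hym : ⨅ j, (dist (ym i) (ym j) + u j) ≤ u i :=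
    (ciInf_le (Finite.bddBelow_range _) i).trans_eq (by simp)
  have : Nonempty ι := ⟨i⟩
  have hxp : dist (xp i) (ym i) + u i ≤ ⨅ j, (dist (xp i) (ym j) + u j) :=
    le_ciInf fun j => by linarith [hu i j]
  linarith

end Kantorovich

theorem stmt1_general {X : Type*} [MetricSpace X] (n : ℕ) (xp xm : Fin n → X) :
    (∀ f : X → ℝ, LipschitzWith 1 f →
      (∑ i, (f (xp i) - f (xm i))) ≤
        ⨅ σ : Equiv.Perm (Fin n), ∑ i, dist (xp i) (xm (σ i))) ∧
    ∃ f : X → ℝ, LipschitzWith 1 f ∧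
      (∑ i, (f (xp i) - f (xm i))) =
        ⨅ σ : Equiv.Perm (Fin n), ∑ i, dist (xp i) (xm (σ i)) := by
  have weak (f : X → ℝ) (hf : LipschitzWith 1 f) :
      ∑ i, (f (xp i) - f (xm i)) ≤ ⨅ σ : Equiv.Perm (Fin n), ∑ i, dist (xp i) (xm (σ i)) :=
    le_ciInf (sum_sub_le_sum_dist_of_lipschitzWith hf xp xm)
  refine ⟨weak, ?_⟩
  obtain ⟨σ₀, hσ₀⟩ := exists_eq_ciInf_of_finite
    (f := fun σ : Equiv.Perm (Fin n) => ∑ i, dist (xp i) (xm (σ i)))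
  obtain ⟨f, hf, hfσ₀⟩ := exists_lipschitzWith_dist_le_sub xp (xm ∘ σ₀) fun σ =>
    hσ₀ ▸ ciInf_le (Finite.bddBelow_range _) (σ₀ * σ)
  refine ⟨f, hf, le_antisymm (weak f hf) ?_⟩
  calc ⨅ σ : Equiv.Perm (Fin n), ∑ i, dist (xp i) (xm (σ i))
      = ∑ i, dist (xp i) (xm (σ₀ i)) := hσ₀.symm
    _ ≤ ∑ i, (f (xp i) - f (xm (σ₀ i))) := sum_le_sum fun i _ => hfσ₀ i
    _ = ∑ i, (f (xp i) - f (xm i)) := by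
      rw [sum_sub_distrib, sum_sub_distrib, Equiv.sum_comp σ₀ fun i => f (xm i)]

/-- **Kantorovich duality.** Let `(X,d)` be a metric space of cardinality `2n`,
partitioned into the `n`-tuples `x⁺` and `x⁻` (the bijectivity of
`Sum.elim x⁺ x⁻ : Fin n ⊕ Fin n → X` expresses that these `2n` points are distinct and
exhaust `X`).  Then the minimum over permutations `σ` of `∑ i, d(x⁺ i, x⁻ (σ i))` equals
the maximum over `1`-Lipschitz functions `f : X → ℝ` of `∑ i, f (x⁺ i) - f (x⁻ i)`,
and the maximum is attained. -/
theorem stmt1 {X : Type*} [MetricSpace X] (n : ℕ) (xp xm : Fin n → X)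
    (hbij : Function.Bijective (Sum.elim xp xm)) :
    (∀ f : X → ℝ, LipschitzWith 1 f →
      (∑ i, (f (xp i) - f (xm i))) ≤
        ⨅ σ : Equiv.Perm (Fin n), ∑ i, dist (xp i) (xm (σ i))) ∧
    ∃ f : X → ℝ, LipschitzWith 1 f ∧
      (∑ i, (f (xp i) - f (xm i))) =
        ⨅ σ : Equiv.Perm (Fin n), ∑ i, dist (xp i) (xm (σ i)) :=
  stmt1_general n xp xm
end

section
/- Let (X,d) be a pseudometric space of even finite cardinality, (T,d_T) a metric tree, and f : X → T a 1-Lipschitz map with m(X, f*d_T) = m(X,d). If a pair {x,y} of points of X appears in some minimal matching of (X,d), then d_T(f(x),f(y)) = d(x,y). -/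
/-- A metric space is geodesic if any two points `x`, `y` are joined by an isometric
embedding of the interval `[0, dist x y]`. -/
def IsGeodesicSpace (T : Type*) [MetricSpace T] : Prop :=
  ∀ x y : T, ∃ γ : ℝ → T, γ 0 = x ∧ γ (dist x y) = y ∧
    ∀ s ∈ Set.Icc (0 : ℝ) (dist x y), ∀ t ∈ Set.Icc (0 : ℝ) (dist x y),
      dist (γ s) (γ t) = |s - t|

/-- The four-point (tree-likeness) condition for a metric space. -/
def FourPointCond (T : Type*) [MetricSpace T] : Prop :=
  ∀ x₁ x₂ x₃ x₄ : T, dist x₁ x₃ + dist x₂ x₄ ≤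
    max (dist x₁ x₂ + dist x₃ x₄) (dist x₁ x₄ + dist x₂ x₃)

/-- A metric tree: a complete geodesic metric space satisfying the four-point condition. -/
def IsMetricTree (T : Type*) [MetricSpace T] : Prop :=
  CompleteSpace T ∧ IsGeodesicSpace T ∧ FourPointCond T

/-- If `f : X → T` is a `1`-Lipschitz map from an even-cardinality pseudometric space into
a metric tree with `m(X, f*d_T) = m(X,d)`, and the pair `{x,y}` appears in some minimal
matching of `(X,d)`, then `d_T(f x, f y) = d(x,y)`. -/
theorem stmt7 {X : Type*} [Fintype X] (hX : Even (Fintype.card X))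
    (d : X → X → ℝ) (hd : IsPseudometric d)
    (T : Type*) [MetricSpace T] (hT : IsMetricTree T)
    (f : X → T) (hf : ∀ x y, dist (f x) (f y) ≤ d x y)
    (hm : matchNum (fun x y => dist (f x) (f y)) = matchNum d)
    (x y : X)
    (hpair : ∃ π : X → X, IsMatching π ∧ matchVal d π = matchNum d ∧ π x = y) :
    dist (f x) (f y) = d x y := by
  obtain ⟨π, hπ, hval, hxy⟩ := hpair
  have hle : ∀ z ∈ Finset.univ, dist (f z) (f (π z)) ≤ d z (π z) := fun z _ => hf z (π z)
  have hsumle : ∑ z, dist (f z) (f (π z)) ≤ ∑ z, d z (π z) := Finset.sum_le_sum hle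
  have hbdd : BddBelow {r | ∃ π : X → X, IsMatching π ∧ r = matchVal (fun x y => dist (f x) (f y)) π} := by
    refine ⟨0, ?_⟩
    rintro r ⟨σ, hσ, rfl⟩
    have : (0:ℝ) ≤ ∑ z, dist (f z) (f (σ z)) :=
      Finset.sum_nonneg fun z _ => dist_nonneg
    unfold matchVal
    linarith
  have hInf : matchNum (fun x y => dist (f x) (f y)) ≤ matchVal (fun x y => dist (f x) (f y)) π :=
    csInf_le hbdd ⟨π, hπ, rfl⟩
  have hsumeq : ∑ z, dist (f z) (f (π z)) = ∑ z, d z (π z) := by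
    have h1 : matchVal d π ≤ matchVal (fun x y => dist (f x) (f y)) π := by
      rw [hval, ← hm]; exact hInf
    unfold matchVal at h1
    have : (∑ z, d z (π z)) / 2 ≤ (∑ z, dist (f z) (f (π z))) / 2 := h1
    linarith
  have := (Finset.sum_eq_sum_iff_of_le hle).mp hsumeq x (Finset.mem_univ x)
  rw [hxy] at this
  exact this
end

section
/- Let (X̃,d) be a metric space containing a finite subset X of even cardinality, (T,d_T) a metric tree, and f : X̃ → T a 1-Lipschitz map whose restriction to X satisfies m(X, f*d_T) = m(X,d). Suppose the pair {x,y} ⊆ X appears in some minimal matching of (X,d), and let γ : [0, d(x,y)] → X̃ be an isometric embedding with γ(0) = x and γ(d(x,y)) = y (a geodesic from x to y). Then f∘γ is an isometric embedding, i.e. d_T(f(γ(s)), f(γ(t))) = |s − t| for all s,t ∈ [0, d(x,y)]. -/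
/-- Let `X` be a finite even-cardinality subset of a metric space `Y`, let `f : Y → T` be a
`1`-Lipschitz map into a metric tree with `m(X, f*d_T) = m(X,d)`, let `{x,y} ⊆ X` appear
in some minimal matching of `(X,d)`, and let `γ` be a geodesic from `x` to `y` in `Y`.
Then `f ∘ γ` is an isometric embedding of `[0, d(x,y)]` into `T`. -/
theorem stmt8 {Y : Type*} [MetricSpace Y] (X : Finset Y) (hX : Even X.card)
    (T : Type*) [MetricSpace T] (hT : IsMetricTree T)
    (f : Y → T) (hf : LipschitzWith 1 f)
    (hm : matchNum (fun x y : ↥X => dist (f x.1) (f y.1)) =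
      matchNum (fun x y : ↥X => dist x.1 y.1))
    (x y : Y) (hx : x ∈ X) (hy : y ∈ X)
    (hpair : ∃ π : ↥X → ↥X, IsMatching π ∧
      matchVal (fun a b : ↥X => dist a.1 b.1) π =
        matchNum (fun a b : ↥X => dist a.1 b.1) ∧ π ⟨x, hx⟩ = ⟨y, hy⟩)
    (γ : ℝ → Y) (hγ0 : γ 0 = x) (hγ1 : γ (dist x y) = y)
    (hγ : ∀ s ∈ Set.Icc (0 : ℝ) (dist x y), ∀ t ∈ Set.Icc (0 : ℝ) (dist x y),
      dist (γ s) (γ t) = |s - t|) :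
    ∀ s ∈ Set.Icc (0 : ℝ) (dist x y), ∀ t ∈ Set.Icc (0 : ℝ) (dist x y),
      dist (f (γ s)) (f (γ t)) = |s - t| := by
  obtain ⟨π, hπ, hπval, hπxy⟩ := hpair
  set d : ↥X → ↥X → ℝ := fun a b : ↥X => dist a.1 b.1 with hd
  set d' : ↥X → ↥X → ℝ := fun a b : ↥X => dist (f a.1) (f b.1) with hd'
  -- pullback values are ≤ original values
  have hle : ∀ a : ↥X, d' a (π a) ≤ d a (π a) := fun a => by
    simpa using hf.dist_le_mul a.1 (π a).1
  have hnonneg : ∀ a : ↥X, (0:ℝ) ≤ d' a (π a) := fun a => dist_nonneg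
  -- matchNum d' ≤ matchVal d' π
  have hbdd : BddBelow {r | ∃ π : ↥X → ↥X, IsMatching π ∧ r = matchVal d' π} := by
    refine ⟨0, fun r hr => ?_⟩
    obtain ⟨σ, hσ, rfl⟩ := hr
    have : (0:ℝ) ≤ ∑ a, d' a (σ a) := Finset.sum_nonneg fun a _ => dist_nonneg
    have := div_nonneg this (by norm_num : (0:ℝ) ≤ 2)
    simpa [matchVal] using this
  have h1 : matchNum d' ≤ matchVal d' π :=
    csInf_le hbdd ⟨π, hπ, rfl⟩
  have h2 : matchVal d' π ≤ matchVal d π := by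
    apply div_le_div_of_nonneg_right ?_ (by norm_num)
    · exact Finset.sum_le_sum fun a _ => hle a
  have heq : matchVal d' π = matchVal d π := by
    have hm' : matchNum d' = matchNum d := hm
    linarith
  -- termwise equality, in particular at x
  have hsum : ∑ a, d' a (π a) = ∑ a, d a (π a) := by
    have := heq
    unfold matchVal at this
    linarith
  have hterm : ∀ a ∈ Finset.univ, d' a (π a) = d a (π a) := by
    have := (Finset.sum_eq_sum_iff_of_le (fun a _ => hle a)).mp hsum
    exact fun a ha => this a ha
  have hkey : dist (f x) (f y) = dist x y := by
    have := hterm ⟨x, hx⟩ (Finset.mem_univ _)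
    rw [hπxy] at this
    exact this
  -- now the geodesic argument
  set D := dist x y with hD
  have main : ∀ s ∈ Set.Icc (0:ℝ) D, ∀ t ∈ Set.Icc (0:ℝ) D, s ≤ t →
      dist (f (γ s)) (f (γ t)) = t - s := by
    intro s hs t ht hst
    have hub : dist (f (γ s)) (f (γ t)) ≤ t - s := by
      have := hf.dist_le_mul (γ s) (γ t)
      rw [hγ s hs t ht] at this
      rw [abs_of_nonpos (by linarith)] at this
      simpa using this
    have h0s : dist (f x) (f (γ s)) ≤ s := by
      have := hf.dist_le_mul (γ 0) (γ s)
      rw [hγ 0 ⟨le_refl _, dist_nonneg⟩ s hs, hγ0] at this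
      rw [abs_of_nonpos (by linarith [hs.1])] at this
      simpa using this
    have htD : dist (f (γ t)) (f y) ≤ D - t := by
      have := hf.dist_le_mul (γ t) (γ D)
      rw [hγ t ht D ⟨dist_nonneg, le_refl _⟩, hγ1] at this
      rw [abs_of_nonpos (by linarith [ht.2])] at this
      simpa using this
    have htri : dist (f x) (f y) ≤ dist (f x) (f (γ s)) +
        dist (f (γ s)) (f (γ t)) + dist (f (γ t)) (f y) := dist_triangle4 _ _ _ _
    rw [hkey] at htri
    linarith
  intro s hs t ht
  rcases le_total s t with h | h
  · rw [main s hs t ht h, abs_of_nonpos (by linarith)]; ring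
  · rw [dist_comm, main t ht s hs h, abs_of_nonneg (by linarith)]
end

section
/- Let (X,d) be a pseudometric space of even finite cardinality, (T,d_T) a metric tree, f : X → T a 1-Lipschitz map with m(X, f*d_T) = m(X,d), and π a minimal matching of (X, f*d_T). Then for any two distinct pairs {x,y} and {x',y'} in π, the arcs [f(x),f(y)] and [f(x'),f(y')] in T have at most one common point; consequently, the 1-dimensional Hausdorff measure of A_π := ⋃_{{x,y}∈π} [f(x),f(y)] equals m(X,d). -/
/-!
Two arcs of a metric tree that share two points `z ≠ w` traverse the segment between them, so
re-pairing the four endpoints across that segment shortcuts it twice; by minimality of `π`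
this is impossible, and the arcs of `π` meet in at most one point. Each arc is an isometric
copy of an interval, so distinct pairs contribute their lengths to `μH[1]` additively, and
the total is `m(π, f*d_T) = m(X, f*d_T) = m(X, d)`.
-/

open MeasureTheory

/-- The arc `[a,b]` between two points of a metric tree. -/
def arcT {T : Type*} [MetricSpace T] (a b : T) : Set T :=
  {z | dist a z + dist z b = dist a b}

open Finset

lemma dist_add_dist_add_two_mul_dist_le {P : Type*} [PseudoMetricSpace P] {a b a' b' z w : P}
    (h : dist a z + dist z w + dist w b = dist a b)
    (h' : dist a' z + dist z w + dist w b' = dist a' b') :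
    dist a a' + dist b b' + 2 * dist z w ≤ dist a b + dist a' b' := by
  linarith [dist_triangle a z a', dist_triangle b w b', dist_comm z a', dist_comm b w]

section Arc

variable {T : Type*} [MetricSpace T]

lemma arcT_comm (a b : T) : arcT a b = arcT b a := by
  ext z
  simp only [arcT, Set.mem_ofPred_eq]
  rw [dist_comm a z, dist_comm z b, dist_comm a b, add_comm]

lemma isClosed_arcT (a b : T) : IsClosed (arcT a b) :=
  isClosed_eq (by fun_prop) continuous_const

lemma dist_eq_abs_sub_of_mem_arcT (hF : FourPointCond T) {a b z w : T}
    (hz : z ∈ arcT a b) (hw : w ∈ arcT a b) : dist z w = |dist a z - dist a w| := by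
  have hz' : dist a z + dist z b = dist a b := hz
  have hw' : dist a w + dist w b = dist a b := hw
  refine le_antisymm ?_ ?_
  · rcases le_max_iff.1 (hF z a w b) with h | h
    · linarith [le_abs_self (dist a z - dist a w), dist_comm z a]
    · linarith [neg_abs_le (dist a z - dist a w)]
  · simpa only [dist_comm] using abs_dist_sub_le z w a

lemma dist_add_dist_add_dist_of_mem_arcT (hF : FourPointCond T) {a b z w : T}
    (hz : z ∈ arcT a b) (hw : w ∈ arcT a b) (h : dist a z ≤ dist a w) :
    dist a z + dist z w + dist w b = dist a b := by
  have hw' : dist a w + dist w b = dist a b := hw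
  rw [dist_eq_abs_sub_of_mem_arcT hF hz hw, abs_of_nonpos (sub_nonpos.2 h)]
  linarith

lemma ordered_of_mem_arcT (hF : FourPointCond T) {a b z w : T}
    (hz : z ∈ arcT a b) (hw : w ∈ arcT a b) :
    dist a z + dist z w + dist w b = dist a b ∨ dist a w + dist w z + dist z b = dist a b :=
  (le_total _ _).imp (dist_add_dist_add_dist_of_mem_arcT hF hz hw)
    (dist_add_dist_add_dist_of_mem_arcT hF hw hz)

lemma exists_isometry_range_eq_arcT (hG : IsGeodesicSpace T) (hF : FourPointCond T) (a b : T) :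
    ∃ γ : Set.Icc (0 : ℝ) (dist a b) → T, Isometry γ ∧ Set.range γ = arcT a b := by
  obtain ⟨γ, h0, hL, hγ⟩ := hG a b
  have hLmem : dist a b ∈ Set.Icc (0 : ℝ) (dist a b) := ⟨dist_nonneg, le_rfl⟩
  have hdist_left : ∀ t : Set.Icc (0 : ℝ) (dist a b), dist a (γ t) = t := fun t => by
    have := hγ 0 ⟨le_rfl, dist_nonneg⟩ t t.2
    rwa [h0, zero_sub, abs_neg, abs_of_nonneg t.2.1] at this
  have hmem : ∀ t : Set.Icc (0 : ℝ) (dist a b), γ t ∈ arcT a b := fun t => by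
    have hdist_right := hγ t t.2 _ hLmem
    rw [hL, abs_of_nonpos (sub_nonpos.2 t.2.2)] at hdist_right
    show dist a (γ t) + dist (γ t) b = dist a b
    rw [hdist_left, hdist_right]
    ring
  refine ⟨fun t => γ t, Isometry.of_dist_eq fun s t => ?_, ?_⟩
  · rw [Subtype.dist_eq, Real.dist_eq]
    exact hγ _ s.2 _ t.2
  · refine subset_antisymm (Set.range_subset_iff.2 hmem) fun z hz => ?_
    have hz' : dist a z + dist z b = dist a b := hz
    let t : Set.Icc (0 : ℝ) (dist a b) :=
      ⟨dist a z, dist_nonneg, by linarith [dist_nonneg (x := z) (y := b)]⟩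
    refine ⟨t, dist_eq_zero.1 ?_⟩
    rw [dist_eq_abs_sub_of_mem_arcT hF (hmem t) hz, hdist_left, sub_self, abs_zero]

lemma hausdorffMeasure_arcT [MeasurableSpace T] [BorelSpace T]
    (hG : IsGeodesicSpace T) (hF : FourPointCond T) (a b : T) :
    μH[1] (arcT a b) = ENNReal.ofReal (dist a b) := by
  obtain ⟨γ, hγ, hrange⟩ := exists_isometry_range_eq_arcT hG hF a b
  rw [← hrange, ← Set.image_univ, hγ.hausdorffMeasure_image (Or.inl zero_le_one),
    ← isometry_subtype_coe.hausdorffMeasure_image (Or.inl zero_le_one), Set.image_univ,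
    Subtype.range_coe, hausdorffMeasure_real, Real.volume_Icc, sub_zero]

end Arc

section Matching

variable {X : Type*} {π : X → X}

lemma IsMatching.conj_s9 (hπ : IsMatching π) (σ : Equiv.Perm X) : IsMatching (σ ∘ π ∘ σ.symm) :=
  ⟨fun u => by simp [hπ.1 _], fun u h => hπ.2 (σ.symm u) (σ.eq_symm_apply.2 h)⟩

lemma matchNum_le_matchVal [Fintype X] {ρ : X → X → ℝ} (hρ : ∀ x y, 0 ≤ ρ x y)
    (hπ : IsMatching π) : matchNum ρ ≤ matchVal ρ π :=
  csInf_le ⟨0, by rintro r ⟨σ, -, rfl⟩; exact div_nonneg (sum_nonneg fun _ _ => hρ _ _) zero_le_two⟩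
    ⟨π, hπ, rfl⟩

/-- Conjugating by `swap (π x) x'` turns the pairs `{x, π x}`, `{x', π x'}` into
`{x, x'}`, `{π x, π x'}` and keeps all other pairs. -/
lemma IsMatching.matchVal_exchange [Fintype X] [DecidableEq X] (hπ : IsMatching π)
    {ρ : X → X → ℝ} (hρ : ∀ x y, ρ x y = ρ y x) {x x' : X} (hx : x' ≠ x) (hπx : x' ≠ π x) :
    matchVal ρ (Equiv.swap (π x) x' ∘ π ∘ (Equiv.swap (π x) x').symm) + ρ x (π x) +
      ρ x' (π x') = matchVal ρ π + ρ x x' + ρ (π x) (π x') := by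
  have h1 : π x ≠ x := hπ.2 x
  have h2 : π x' ≠ x' := hπ.2 x'
  have h3 : π x' ≠ x := fun h => hπx (by rw [← h, hπ.1])
  have h4 : π x' ≠ π x := fun h => hx (hπ.1.injective h)
  set π' := Equiv.swap (π x) x' ∘ π ∘ (Equiv.swap (π x) x').symm
  set S : Finset X := {x, x', π x, π x'}
  have hagree : ∀ u ∉ S, π' u = π u := by
    intro u hu
    simp only [S, mem_insert, mem_singleton, not_or] at hu
    obtain ⟨hux, hux', huπx, huπx'⟩ := hu
    have hπu : π u ≠ π x := fun h => hux (hπ.1.injective h)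
    have hπu' : π u ≠ x' := fun h => huπx' (by rw [← h, hπ.1])
    simp [π', Equiv.swap_apply_of_ne_of_ne, huπx, hux', hπu, hπu']
  have hsplit : ∀ g : X → X, ∑ u, ρ u (g u) = ∑ u ∈ S, ρ u (g u) + ∑ u ∈ Sᶜ, ρ u (g u) :=
    fun g => (sum_add_sum_compl S _).symm
  have hS : ∀ g : X → X, ∑ u ∈ S, ρ u (g u) =
      ρ x (g x) + ρ x' (g x') + ρ (π x) (g (π x)) + ρ (π x') (g (π x')) := fun g => by
    rw [sum_insert (by simp [hx.symm, h1.symm, h3.symm]), sum_insert (by simp [hπx, h2.symm]),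
      sum_insert (by simp [h4.symm]), sum_singleton]
    ring
  have hcompl : ∑ u ∈ Sᶜ, ρ u (π' u) = ∑ u ∈ Sᶜ, ρ u (π u) :=
    sum_congr rfl fun u hu => by rw [hagree u (mem_compl.1 hu)]
  unfold matchVal
  rw [hsplit π', hsplit π, hS, hS, hcompl]
  simp only [π', Function.comp_apply, Equiv.symm_swap, Equiv.swap_apply_left,
    Equiv.swap_apply_right, Equiv.swap_apply_of_ne_of_ne, ne_eq, not_false_eq_true, hπ.1 _,
    h1.symm, h2, h4, hx.symm]
  linarith [hρ x' x, hρ (π x') (π x), hρ (π x) x, hρ (π x') x']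

lemma IsMatching.add_le_of_matchVal_eq_matchNum [Fintype X] (hπ : IsMatching π)
    {ρ : X → X → ℝ} (hρ0 : ∀ x y, 0 ≤ ρ x y) (hρ : ∀ x y, ρ x y = ρ y x)
    (hmin : matchVal ρ π = matchNum ρ) {x x' : X} (hx : x' ≠ x) (hπx : x' ≠ π x) :
    ρ x (π x) + ρ x' (π x') ≤ ρ x x' + ρ (π x) (π x') := by
  classical
  linarith [matchNum_le_matchVal hρ0 (hπ.conj_s9 (Equiv.swap (π x) x')),
    hπ.matchVal_exchange hρ hx hπx]

lemma IsMatching.sum_eq_two_nsmul_sum_filter_lt [Fintype X] [LinearOrder X] {M : Type*}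
    [AddCommMonoid M] (hπ : IsMatching π) {g : X → M} (hg : ∀ u, g (π u) = g u) :
    ∑ u, g u = 2 • ∑ u with u < π u, g u := by
  let F u := if u < π u then g u else 0
  have hsplit : ∀ u, g u = F u + if π u < u then g u else 0 := fun u => by
    rcases (hπ.2 u).symm.lt_or_gt with h | h <;> simp [F, h, h.not_gt]
  have hswap : ∑ u, (if π u < u then g u else 0) = ∑ u, F u :=
    calc ∑ u, (if π u < u then g u else 0) = ∑ u, F (π u) := by simp only [F, hπ.1 _, hg]
      _ = ∑ u, F u := Equiv.sum_comp (hπ.1.toPerm π) F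
  rw [sum_congr rfl fun u _ => hsplit u, sum_add_distrib, hswap, sum_filter, two_nsmul]

lemma IsMatching.iUnion_eq_biUnion_filter_lt [Fintype X] [LinearOrder X] {α : Type*}
    (hπ : IsMatching π) {s : X → Set α} (hs : ∀ u, s (π u) = s u) :
    ⋃ u, s u = ⋃ u ∈ ({u | u < π u} : Finset X), s u := by
  refine subset_antisymm (Set.iUnion_subset fun u => ?_)
    (Set.iUnion₂_subset fun u _ => Set.subset_iUnion s u)
  rcases (hπ.2 u).symm.lt_or_gt with h | h
  · exact Set.subset_biUnion_of_mem (u := s) (by simpa using h)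
  · rw [← hs]
    exact Set.subset_biUnion_of_mem (u := s) (by simpa [hπ.1 u] using h)

end Matching

section Tree

variable {X T : Type*} [Fintype X] [MetricSpace T] {f : X → T} {π : X → X}

lemma IsMatching.eq_of_dist_add_dist_add_dist (hπ : IsMatching π)
    (hmin : matchVal (fun x y => dist (f x) (f y)) π = matchNum (fun x y => dist (f x) (f y)))
    {x x' : X} (hx : x' ≠ x) (hπx : x' ≠ π x) {z w : T}
    (h : dist (f x) z + dist z w + dist w (f (π x)) = dist (f x) (f (π x)))
    (h' : dist (f x') z + dist z w + dist w (f (π x')) = dist (f x') (f (π x'))) : z = w := by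
  have hexchange := hπ.add_le_of_matchVal_eq_matchNum (fun _ _ => dist_nonneg)
    (fun _ _ => dist_comm _ _) hmin hx hπx
  exact dist_le_zero.1 (by linarith [dist_add_dist_add_two_mul_dist_le h h'])

lemma IsMatching.subsingleton_arcT_inter (hF : FourPointCond T) (hπ : IsMatching π)
    (hmin : matchVal (fun x y => dist (f x) (f y)) π = matchNum (fun x y => dist (f x) (f y)))
    {x x' : X} (hx : x' ≠ x) (hπx : x' ≠ π x) :
    (arcT (f x) (f (π x)) ∩ arcT (f x') (f (π x'))).Subsingleton := by
  intro z hz w hw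
  wlog h : dist (f x) z + dist z w + dist w (f (π x)) = dist (f x) (f (π x)) generalizing z w
  · exact (this hw hz ((ordered_of_mem_arcT hF hz.1 hw.1).resolve_left h)).symm
  rcases ordered_of_mem_arcT hF hz.2 hw.2 with h' | h'
  · exact hπ.eq_of_dist_add_dist_add_dist hmin hx hπx h h'
  · have hx'' : π x' ≠ x := fun h'' => hπx (by rw [← h'', hπ.1])
    have hπx'' : π x' ≠ π x := fun h'' => hx (hπ.1.injective h'')
    refine hπ.eq_of_dist_add_dist_add_dist hmin hx'' hπx'' h ?_
    rw [hπ.1]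
    simp only [dist_comm] at h' ⊢
    linarith

lemma IsMatching.hausdorffMeasure_iUnion_arcT [MeasurableSpace T] [BorelSpace T]
    (hG : IsGeodesicSpace T) (hF : FourPointCond T) (hπ : IsMatching π)
    (hdisj : ∀ x x' : X, x' ≠ x → x' ≠ π x →
      (arcT (f x) (f (π x)) ∩ arcT (f x') (f (π x'))).Subsingleton) :
    μH[1] (⋃ x, arcT (f x) (f (π x))) =
      ENNReal.ofReal (matchVal (fun x y => dist (f x) (f y)) π) := by
  let := LinearOrder.lift' _ (Fintype.equivFin X).injective
  have := Measure.nullSingletonClass_hausdorff T zero_lt_one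
  have hpairs : (({u | u < π u} : Finset X) : Set X).Pairwise
      (Function.onFun (AEDisjoint μH[1]) fun u => arcT (f u) (f (π u))) := by
    intro u hu v hv huv
    simp only [coe_filter, mem_univ, true_and, Set.mem_ofPred_eq] at hu hv
    have hvπu : v ≠ π u := by
      rintro rfl
      rw [hπ.1] at hv
      exact hv.asymm hu
    exact (hdisj u v huv.symm hvπu).measure_zero _
  have hsum : matchVal (fun x y => dist (f x) (f y)) π =
      ∑ u with u < π u, dist (f u) (f (π u)) := by
    rw [matchVal, hπ.sum_eq_two_nsmul_sum_filter_lt fun u => by rw [hπ.1, dist_comm], two_nsmul]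
    ring
  rw [hπ.iUnion_eq_biUnion_filter_lt fun u => by rw [hπ.1, arcT_comm],
    measure_biUnion_finset₀ hpairs fun u _ => (isClosed_arcT _ _).measurableSet.nullMeasurableSet,
    hsum, ENNReal.ofReal_sum_of_nonneg fun _ _ => dist_nonneg]
  simp only [hausdorffMeasure_arcT hG hF]

end Tree

theorem stmt9_general {X : Type*} [Fintype X]
    (d : X → X → ℝ)
    (T : Type*) [MetricSpace T] [MeasurableSpace T] [BorelSpace T] (hT : IsMetricTree T)
    (f : X → T)
    (hm : matchNum (fun x y => dist (f x) (f y)) = matchNum d)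
    (π : X → X) (hπ : IsMatching π)
    (hπmin : matchVal (fun x y => dist (f x) (f y)) π =
      matchNum (fun x y => dist (f x) (f y))) :
    (∀ x x' : X, x' ≠ x → x' ≠ π x →
      Set.Subsingleton (arcT (f x) (f (π x)) ∩ arcT (f x') (f (π x')))) ∧
    μH[1] (⋃ x : X, arcT (f x) (f (π x))) = ENNReal.ofReal (matchNum d) := by
  obtain ⟨-, hG, hF⟩ := hT
  have hdisj : ∀ x x' : X, x' ≠ x → x' ≠ π x →
      (arcT (f x) (f (π x)) ∩ arcT (f x') (f (π x'))).Subsingleton :=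
    fun _ _ hx hπx => hπ.subsingleton_arcT_inter hF hπmin hx hπx
  exact ⟨hdisj, by rw [hπ.hausdorffMeasure_iUnion_arcT hG hF hdisj, hπmin, hm]⟩

/-- Let `f : X → T` be `1`-Lipschitz into a metric tree with `m(X, f*d_T) = m(X,d)` and let
`π` be a minimal matching of `(X, f*d_T)`.  Then the arcs `[f x, f (π x)]` corresponding to
distinct pairs of `π` meet in at most one point, and the `1`-dimensional Hausdorff measure
of `A_π = ⋃_{{x,y} ∈ π} [f x, f y]` equals `m(X,d)`. -/
theorem stmt9 {X : Type*} [Fintype X] (hX : Even (Fintype.card X))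
    (d : X → X → ℝ) (hd : IsPseudometric d)
    (T : Type*) [MetricSpace T] [MeasurableSpace T] [BorelSpace T] (hT : IsMetricTree T)
    (f : X → T) (hf : ∀ x y, dist (f x) (f y) ≤ d x y)
    (hm : matchNum (fun x y => dist (f x) (f y)) = matchNum d)
    (π : X → X) (hπ : IsMatching π)
    (hπmin : matchVal (fun x y => dist (f x) (f y)) π =
      matchNum (fun x y => dist (f x) (f y))) :
    (∀ x x' : X, x' ≠ x → x' ≠ π x →
      Set.Subsingleton (arcT (f x) (f (π x)) ∩ arcT (f x') (f (π x')))) ∧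
    μH[1] (⋃ x : X, arcT (f x) (f (π x))) = ENNReal.ofReal (matchNum d) :=
  stmt9_general d T hT f hm π hπ hπmin
end

section
/- Let (X,d) be a pseudometric space of even finite cardinality, (T,d_T) a metric tree, f : X → T a 1-Lipschitz map with m(X, f*d_T) = m(X,d), and π a minimal matching of (X, f*d_T). Then for every matching π' of X (not necessarily minimal), A_π ⊆ A_{π'}, where A_σ := ⋃_{{x,y}∈σ} [f(x),f(y)]. In particular A_π equals the union of the arcs [f(x),f(y)] over all pairs {x,y} that appear in some minimal matching of (X, f*d_T). -/
lemma gp_trans' {T : Type*} [MetricSpace T] (h : FourPointCond T) (z a b c : T)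
    (hab : dist a b < dist a z + dist b z) (hbc : dist b c < dist b z + dist c z) :
    dist a c < dist a z + dist c z := by
  have h4 := h a z c b
  have h1 : dist z b = dist b z := dist_comm _ _
  have h2 : dist c b = dist b c := dist_comm _ _
  have h3 : dist c z = dist z c := dist_comm _ _
  rcases le_max_iff.mp h4 with h' | h' <;> linarith

lemma even_card_of_invol {α : Type*} [DecidableEq α] (σ : α → α)
    (hσ : Function.Involutive σ) :
    ∀ s : Finset α, (∀ a ∈ s, σ a ∈ s) → (∀ a ∈ s, σ a ≠ a) → Even s.card := by
  intro s
  induction s using Finset.strongInduction with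
  | _ s ih =>
    intro hinv hfix
    rcases Finset.eq_empty_or_nonempty s with rfl | ⟨a, ha⟩
    · simp
    · have hσa : σ a ∈ s := hinv a ha
      have hne : σ a ≠ a := hfix a ha
      have hpair : ({a, σ a} : Finset α) ⊆ s := by
        intro b hb
        simp only [Finset.mem_insert, Finset.mem_singleton] at hb
        rcases hb with rfl | rfl <;> assumption
      have hss : s \ {a, σ a} ⊂ s :=
        Finset.sdiff_ssubset hpair ⟨a, by simp⟩
      have hinv' : ∀ b ∈ s \ {a, σ a}, σ b ∈ s \ {a, σ a} := by
        intro b hb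
        rw [Finset.mem_sdiff] at hb ⊢
        obtain ⟨hbs, hbn⟩ := hb
        simp only [Finset.mem_insert, Finset.mem_singleton] at hbn ⊢
        push_neg at hbn ⊢
        refine ⟨hinv b hbs, ?_, ?_⟩
        · intro hba
          exact hbn.2 (by rw [← hba, hσ b])
        · intro hba
          exact hbn.1 (hσ.injective hba)
      have hE := ih _ hss hinv' (fun b hb => hfix b (Finset.mem_sdiff.1 hb).1)
      have hp2 : ({a, σ a} : Finset α).card = 2 := Finset.card_pair hne.symm
      have hle := Finset.card_le_card hpair
      have hcard : s.card = (s \ {a, σ a}).card + 2 := by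
        rw [Finset.card_sdiff_of_subset hpair, hp2]; omega
      rw [hcard]
      exact hE.add (by decide)

lemma min_match_subset {X : Type*} [Fintype X] {T : Type*} [MetricSpace T]
    (hfpc : FourPointCond T) (f : X → T) (ρ ρ' : X → X)
    (hρ : IsMatching ρ) (hρ' : IsMatching ρ')
    (hmin : matchVal (fun a b => dist (f a) (f b)) ρ =
      matchNum (fun a b => dist (f a) (f b))) :
    (⋃ x : X, arcT (f x) (f (ρ x))) ⊆ ⋃ x : X, arcT (f x) (f (ρ' x)) := by
  classical
  intro z hz
  by_contra hz'
  simp only [Set.mem_iUnion, arcT, Set.mem_setOf_eq] at hz hz'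
  push_neg at hz'
  obtain ⟨x, hx⟩ := hz
  set g : X → ℝ := fun a => dist (f a) z with hg
  have hcross' : ∀ a, dist (f a) (f (ρ' a)) < g a + g (ρ' a) := by
    intro a
    have htr : dist (f a) (f (ρ' a)) ≤ dist (f a) z + dist z (f (ρ' a)) :=
      dist_triangle _ _ _
    have hne := hz' a
    have hc : dist z (f (ρ' a)) = g (ρ' a) := dist_comm _ _
    rcases lt_or_eq_of_le htr with h | h
    · simpa [hg, hc] using h
    · exact absurd h.symm hne
  have gpos : ∀ a, 0 < g a := by
    intro a
    have h1 := hcross' a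
    have h2 : dist (f (ρ' a)) z ≤ dist (f (ρ' a)) (f a) + dist (f a) z :=
      dist_triangle _ _ _
    have h3 : dist (f (ρ' a)) (f a) = dist (f a) (f (ρ' a)) := dist_comm _ _
    simp only [hg] at *
    linarith
  set rel : X → X → Prop := fun a b => dist (f a) (f b) < g a + g b with hrel
  have rel_symm : ∀ a b, rel a b → rel b a := by
    intro a b h
    simp only [hrel] at h ⊢
    rw [dist_comm]
    linarith
  have rel_trans : ∀ a b c, rel a b → rel b c → rel a c := by
    intro a b c h1 h2
    exact gp_trans' hfpc z (f a) (f b) (f c) h1 h2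
  have rel_refl : ∀ a, rel a a := by
    intro a
    simp only [hrel, dist_self]
    have := gpos a; linarith
  have hxρ : ¬ rel x (ρ x) := by
    simp only [hrel, not_lt]
    have : dist z (f (ρ x)) = g (ρ x) := dist_comm _ _
    simp only [hg] at *
    linarith
  set Q : Finset X := Finset.univ.filter (fun a => rel a x) with hQ
  have hQmem : ∀ a, a ∈ Q ↔ rel a x := by intro a; simp [hQ]
  have hQρ' : ∀ a ∈ Q, ρ' a ∈ Q := by
    intro a haQ
    exact (hQmem _).2 (rel_trans _ _ _ (rel_symm _ _ (hcross' a)) ((hQmem _).1 haQ))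
  have hQeven : Even Q.card := even_card_of_invol ρ' hρ'.1 Q hQρ' (fun a _ => hρ'.2 a)
  set R : Finset X := Q.filter (fun a => ρ a ∈ Q) with hR
  have hRsub : R ⊆ Q := Finset.filter_subset _ _
  have hRρ : ∀ a ∈ R, ρ a ∈ R := by
    intro a haR
    rw [hR, Finset.mem_filter] at haR ⊢
    exact ⟨haR.2, by rw [hρ.1 a]; exact haR.1⟩
  have hReven : Even R.card := even_card_of_invol ρ hρ.1 R hRρ (fun a _ => hρ.2 a)
  have hxQ : x ∈ Q := (hQmem x).2 (rel_refl x)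
  have hxR : x ∉ R := by
    intro h
    have hρxQ : ρ x ∈ Q := (Finset.mem_filter.1 h).2
    exact hxρ (rel_symm _ _ ((hQmem _).1 hρxQ))
  have hQRcard : (Q \ R).card + R.card = Q.card := Finset.card_sdiff_add_card_eq_card hRsub
  have hQReven : Even (Q \ R).card := by
    rcases hQeven with ⟨p, hp⟩; rcases hReven with ⟨q, hq⟩
    refine ⟨p - q, by omega⟩
  have hxQR : x ∈ Q \ R := Finset.mem_sdiff.2 ⟨hxQ, hxR⟩
  have h2le : 1 < (Q \ R).card := by
    have h1 : 1 ≤ (Q \ R).card := Finset.card_pos.2 ⟨x, hxQR⟩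
    rcases hQReven with ⟨k, hk⟩; omega
  obtain ⟨u, huQR, hux⟩ := Finset.exists_mem_ne h2le x
  have huQ : u ∈ Q := (Finset.mem_sdiff.1 huQR).1
  have huR : u ∉ R := (Finset.mem_sdiff.1 huQR).2
  have hρuQ : ρ u ∉ Q := by
    intro h
    exact huR (Finset.mem_filter.2 ⟨huQ, h⟩)
  have hρxQ : ρ x ∉ Q := by
    intro h
    exact hxρ (rel_symm _ _ ((hQmem _).1 h))
  have hux_rel : rel u x := (hQmem u).1 huQ
  have huρ : ¬ rel u (ρ u) := by
    intro h
    exact hρuQ ((hQmem _).2 (rel_trans _ _ _ (rel_symm _ _ h) hux_rel))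
  -- key distance facts
  have exρx : dist (f x) (f (ρ x)) = g x + g (ρ x) := by
    have : dist z (f (ρ x)) = g (ρ x) := dist_comm _ _
    simp only [hg] at *
    linarith
  have exρu : dist (f u) (f (ρ u)) = g u + g (ρ u) := by
    have htr : dist (f u) (f (ρ u)) ≤ dist (f u) z + dist z (f (ρ u)) :=
      dist_triangle _ _ _
    have hc : dist z (f (ρ u)) = g (ρ u) := dist_comm _ _
    simp only [hrel, not_lt] at huρ
    simp only [hg] at *
    linarith
  have hxu : dist (f x) (f u) < g x + g u := rel_symm _ _ hux_rel
  have hρ2 : dist (f (ρ x)) (f (ρ u)) ≤ g (ρ x) + g (ρ u) := by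
    have htr : dist (f (ρ x)) (f (ρ u)) ≤ dist (f (ρ x)) z + dist z (f (ρ u)) :=
      dist_triangle _ _ _
    have hc : dist z (f (ρ u)) = g (ρ u) := dist_comm _ _
    simp only [hg] at *
    linarith
  -- distinctness
  have h2 : u ≠ ρ x := fun h => hρxQ (h ▸ huQ)
  have h3 : ρ u ≠ x := by
    intro h
    exact h2 (by rw [← h, hρ.1 u])
  have h4 : ρ u ≠ ρ x := fun h => hux (hρ.1.injective h)
  have h5 : ρ x ≠ x := hρ.2 x
  have h6 : ρ u ≠ u := hρ.2 u
  -- the swapped matching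
  set σ : X → X := fun a =>
    if a = x then u else if a = u then x else
    if a = ρ x then ρ u else if a = ρ u then ρ x else ρ a with hσdef
  have σx : σ x = u := by simp [hσdef]
  have σu : σ u = x := by simp [hσdef, hux]
  have σρx : σ (ρ x) = ρ u := by simp [hσdef, h5, Ne.symm h2]
  have σρu : σ (ρ u) = ρ x := by simp [hσdef, h3, h6, h4]
  have σother : ∀ a, a ≠ x → a ≠ u → a ≠ ρ x → a ≠ ρ u → σ a = ρ a := by
    intro a ha1 ha2 ha3 ha4
    simp [hσdef, ha1, ha2, ha3, ha4]
  have ρother : ∀ a, a ≠ x → a ≠ u → a ≠ ρ x → a ≠ ρ u →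
      (ρ a ≠ x ∧ ρ a ≠ u ∧ ρ a ≠ ρ x ∧ ρ a ≠ ρ u) := by
    intro a ha1 ha2 ha3 ha4
    refine ⟨?_, ?_, ?_, ?_⟩
    · intro h; exact ha3 (by rw [← h, hρ.1 a])
    · intro h; exact ha4 (by rw [← h, hρ.1 a])
    · intro h; exact ha1 (hρ.1.injective h)
    · intro h; exact ha2 (hρ.1.injective h)
  have hσmatch : IsMatching σ := by
    constructor
    · intro a
      by_cases ha1 : a = x
      · rw [ha1, σx, σu]
      by_cases ha2 : a = u
      · rw [ha2, σu, σx]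
      by_cases ha3 : a = ρ x
      · rw [ha3, σρx, σρu]
      by_cases ha4 : a = ρ u
      · rw [ha4, σρu, σρx]
      · obtain ⟨hb1, hb2, hb3, hb4⟩ := ρother a ha1 ha2 ha3 ha4
        rw [σother a ha1 ha2 ha3 ha4, σother _ hb1 hb2 hb3 hb4, hρ.1 a]
    · intro a
      by_cases ha1 : a = x
      · rw [ha1, σx]; exact hux
      by_cases ha2 : a = u
      · rw [ha2, σu]; exact Ne.symm hux
      by_cases ha3 : a = ρ x
      · rw [ha3, σρx]; exact h4
      by_cases ha4 : a = ρ u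
      · rw [ha4, σρu]; exact Ne.symm h4
      · rw [σother a ha1 ha2 ha3 ha4]; exact hρ.2 a
  -- sum comparison
  have hdist : ∀ a b : X, ρ a = b → ρ b = a := by
    intro a b h; rw [← h, hρ.1 a]
  set s : Finset X := {x, u, ρ x, ρ u} with hs
  have hxmem : x ∉ ({u, ρ x, ρ u} : Finset X) := by
    simp [Ne.symm hux, Ne.symm h5, Ne.symm h3]
  have humem : u ∉ ({ρ x, ρ u} : Finset X) := by
    simp [h2, Ne.symm h6]
  have hρxmem : (ρ x) ∉ ({ρ u} : Finset X) := by simp [Ne.symm h4]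
  have hsumσ : ∑ a ∈ s, dist (f a) (f (σ a)) =
      dist (f x) (f u) + dist (f u) (f x) +
      dist (f (ρ x)) (f (ρ u)) + dist (f (ρ u)) (f (ρ x)) := by
    rw [hs, Finset.sum_insert hxmem, Finset.sum_insert humem,
      Finset.sum_insert hρxmem, Finset.sum_singleton, σx, σu, σρx, σρu]
    ring
  have hsumρ : ∑ a ∈ s, dist (f a) (f (ρ a)) =
      dist (f x) (f (ρ x)) + dist (f u) (f (ρ u)) +
      dist (f (ρ x)) (f x) + dist (f (ρ u)) (f u) := by
    rw [hs, Finset.sum_insert hxmem, Finset.sum_insert humem,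
      Finset.sum_insert hρxmem, Finset.sum_singleton, hρ.1 x, hρ.1 u]
    ring
  have hslt : ∑ a ∈ s, dist (f a) (f (σ a)) < ∑ a ∈ s, dist (f a) (f (ρ a)) := by
    rw [hsumσ, hsumρ, dist_comm (f u) (f x), dist_comm (f (ρ u)) (f (ρ x)),
      dist_comm (f (ρ x)) (f x), dist_comm (f (ρ u)) (f u)]
    linarith
  have hrest : ∑ a ∈ Finset.univ \ s, dist (f a) (f (σ a)) =
      ∑ a ∈ Finset.univ \ s, dist (f a) (f (ρ a)) := by
    apply Finset.sum_congr rfl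
    intro a ha
    rw [Finset.mem_sdiff, hs] at ha
    simp only [Finset.mem_insert, Finset.mem_singleton] at ha
    push_neg at ha
    obtain ⟨_, ha1, ha2, ha3, ha4⟩ := ha
    rw [σother a ha1 ha2 ha3 ha4]
  have hsumlt : ∑ a, dist (f a) (f (σ a)) < ∑ a, dist (f a) (f (ρ a)) := by
    have e1 := Finset.sum_sdiff (f := fun a => dist (f a) (f (σ a)))
      (Finset.subset_univ s)
    have e2 := Finset.sum_sdiff (f := fun a => dist (f a) (f (ρ a)))
      (Finset.subset_univ s)
    rw [← e1, ← e2, hrest]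
    linarith
  have hvlt : matchVal (fun a b => dist (f a) (f b)) σ <
      matchVal (fun a b => dist (f a) (f b)) ρ := by
    unfold matchVal
    linarith
  have hbdd : BddBelow {r | ∃ π : X → X, IsMatching π ∧
      r = matchVal (fun a b => dist (f a) (f b)) π} := by
    refine ⟨0, ?_⟩
    rintro r ⟨π0, _, rfl⟩
    unfold matchVal
    apply div_nonneg _ (by norm_num)
    exact Finset.sum_nonneg fun a _ => dist_nonneg
  have hle := csInf_le hbdd ⟨σ, hσmatch, rfl⟩
  unfold matchNum at hmin
  linarith

/-- Let `f : X → T` be `1`-Lipschitz into a metric tree with `m(X, f*d_T) = m(X,d)` and let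
`π` be a minimal matching of `(X, f*d_T)`.  Then `A_π ⊆ A_{π'}` for every matching `π'` of
`X`, and `A_π` equals the union of the arcs `[f x, f y]` over all pairs `{x,y}` appearing
in some minimal matching of `(X, f*d_T)`. -/
theorem stmt10 {X : Type*} [Fintype X] (hX : Even (Fintype.card X))
    (d : X → X → ℝ) (hd : IsPseudometric d)
    (T : Type*) [MetricSpace T] (hT : IsMetricTree T)
    (f : X → T) (hf : ∀ x y, dist (f x) (f y) ≤ d x y)
    (hm : matchNum (fun x y => dist (f x) (f y)) = matchNum d)
    (π : X → X) (hπ : IsMatching π)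
    (hπmin : matchVal (fun x y => dist (f x) (f y)) π =
      matchNum (fun x y => dist (f x) (f y))) :
    (∀ π' : X → X, IsMatching π' →
      (⋃ x : X, arcT (f x) (f (π x))) ⊆ ⋃ x : X, arcT (f x) (f (π' x))) ∧
    (⋃ x : X, arcT (f x) (f (π x))) =
      ⋃ (x : X) (y : X) (_ : ∃ σ : X → X, IsMatching σ ∧
        matchVal (fun a b => dist (f a) (f b)) σ =
          matchNum (fun a b => dist (f a) (f b)) ∧ σ x = y),
        arcT (f x) (f y) := by
  obtain ⟨_, _, hfpc⟩ := hT
  constructor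
  · intro π' hπ'
    exact min_match_subset hfpc f π π' hπ hπ' hπmin
  · apply Set.Subset.antisymm
    · intro z hz
      rcases Set.mem_iUnion.1 hz with ⟨x, hx⟩
      exact Set.mem_iUnion.2 ⟨x, Set.mem_iUnion.2 ⟨π x,
        Set.mem_iUnion.2 ⟨⟨π, hπ, hπmin, rfl⟩, hx⟩⟩⟩
    · intro z hz
      simp only [Set.mem_iUnion] at hz
      obtain ⟨x, y, ⟨σ, hσ, hσmin, hσx⟩, hzarc⟩ := hz
      have hzσ : z ∈ ⋃ a : X, arcT (f a) (f (σ a)) := by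
        apply Set.mem_iUnion.2 ⟨x, ?_⟩
        rw [hσx]
        exact hzarc
      exact min_match_subset hfpc f σ π hσ hπ hσmin hzσ
end

section
/- Let (X̃,d) be a geodesic metric space, X ⊆ X̃ a finite subset of even cardinality, and g : X̃ → ℝ a 1-Lipschitz function. Then ∫_ℝ Cut_{Z2}(g^{-1}(t), X) dt ≤ m(X,d), where m(X,d) is the matching number of X with the induced metric. -/
open MeasureTheory
open scoped ENNReal

/-- `A` is a `ℤ₂`-cut of the finite set `X ⊆ Y` if some connected component of `Y \ A`
contains an odd number of points of `X`. -/
def IsZ2Cut {Y : Type*} [TopologicalSpace Y] (A : Set Y) (X : Finset Y) : Prop :=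
  ∃ p ∈ Aᶜ, Odd (Set.ncard {x : Y | x ∈ X ∧ x ∈ connectedComponentIn Aᶜ p})

/-- `Cut_{ℤ₂}(A, X)`: the number of connected components of `A` that are `ℤ₂`-cuts of `X`. -/
noncomputable def cutZ2 {Y : Type*} [TopologicalSpace Y] (A : Set Y) (X : Finset Y) : ℝ≥0∞ :=
  (Set.encard {C : Set Y |
    (∃ p ∈ A, C = connectedComponentIn A p) ∧ IsZ2Cut C X} : ℕ∞)

/-!
Fix a matching `π` realising `m(X, d)` and join each matched pair by a geodesic. If a component
`C` of the level set `g⁻¹(t)` is a `ℤ₂`-cut, some component `O` of its complement contains an odd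
number of points of `X`, so some matched pair has exactly one point in `O`, and the geodesic
joining it must meet `C`. Hence `Cut_{ℤ₂}(g⁻¹(t), X)` is at most the total number of components
of the level sets of `g` along the chosen geodesics. Along a geodesic of length `ℓ`, `g` is
`1`-Lipschitz, and the number of components of its level sets integrates to at most `ℓ`: cut
`[0, ℓ]` into `N` equal pieces; the image of each piece has measure at most `ℓ / N`, for large `N`
the number of pieces whose image contains `t` bounds the number of components of the level set
at `t`, and Fatou's lemma passes to the limit. Summing over the pairs gives `m(X, d)`.
-/

open Filter Set

theorem Set.encard_le_of_forall_finset {α : Type*} {s : Set α} {c : ℝ≥0∞}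
    (h : ∀ t : Finset α, ↑t ⊆ s → (t.card : ℝ≥0∞) ≤ c) : (s.encard : ℝ≥0∞) ≤ c := by
  rcases s.finite_or_infinite with hs | hs
  · rw [hs.encard_eq_coe_toFinset_card, ENat.toENNReal_coe]
    exact h _ hs.coe_toFinset.subset
  · rw [hs.encard_eq, ENat.toENNReal_top, ← ENNReal.iSup_natCast]
    refine iSup_le fun n => ?_
    obtain ⟨t, hts, rfl⟩ := hs.exists_subset_card_eq n
    exact h t hts

section Components

variable {α β : Type*} [TopologicalSpace α] [TopologicalSpace β]

def connectedComponentsIn (A : Set α) : Set (Set α) :=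
  connectedComponentIn A '' A

theorem eq_connectedComponentIn_of_mem {A C : Set α} {x : α} (hC : C ∈ connectedComponentsIn A)
    (hx : x ∈ C) : C = connectedComponentIn A x := by
  obtain ⟨p, -, rfl⟩ := hC
  exact connectedComponentIn_eq hx

theorem cutZ2_eq (A : Set α) (X : Finset α) :
    cutZ2 A X = ({C ∈ connectedComponentsIn A | IsZ2Cut C X}.encard : ℝ≥0∞) := by
  simp only [cutZ2, connectedComponentsIn, mem_image, eq_comm]

theorem IsPreconnected.inter_nonempty_of_mem_connectedComponentIn_compl {C G : Set α} {q x y : α}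
    (hG : IsPreconnected G) (hx : x ∈ G) (hy : y ∈ G) (hxq : x ∈ _root_.connectedComponentIn Cᶜ q)
    (hyq : y ∉ _root_.connectedComponentIn Cᶜ q) : (G ∩ C).Nonempty := by
  by_contra hGC
  have hG_sub : G ⊆ Cᶜ := fun z hz hzC => hGC ⟨z, hz, hzC⟩
  rw [connectedComponentIn_eq hxq] at hyq
  exact hyq (hG.subset_connectedComponentIn hx hG_sub hy)

/-- A continuous `f` maps each component of `s ∩ f ⁻¹' A` into a single component of `A`. -/
theorem encard_connectedComponentsIn_inter_image_le {f : α → β} {s : Set α}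
    (hf : ContinuousOn f s) (A : Set β) :
    {C ∈ connectedComponentsIn A | (C ∩ f '' s).Nonempty}.encard ≤
      (connectedComponentsIn (s ∩ f ⁻¹' A)).encard := by
  cases isEmpty_or_nonempty α
  · simp [eq_empty_of_isEmpty s]
  have hrep : ∀ C ∈ {C ∈ connectedComponentsIn A | (C ∩ f '' s).Nonempty},
      ∃ p ∈ s ∩ f ⁻¹' A, f p ∈ C := by
    rintro C ⟨hC, y, hyC, p, hp, rfl⟩
    obtain ⟨q, -, rfl⟩ := hC
    exact ⟨p, ⟨hp, connectedComponentIn_subset A q hyC⟩, hyC⟩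
  choose! p hp hpC using hrep
  have himage : ∀ C ∈ {C ∈ connectedComponentsIn A | (C ∩ f '' s).Nonempty},
      f '' connectedComponentIn (s ∩ f ⁻¹' A) (p C) ⊆ C := by
    intro C hC
    refine ((hf.mono inter_subset_left).image_connectedComponentIn_subset (hp C hC)).trans ?_
    refine (connectedComponentIn_mono _ ?_).trans
      (eq_connectedComponentIn_of_mem hC.1 (hpC C hC)).ge
    exact (image_mono inter_subset_right).trans (image_preimage_subset f A)
  refine encard_le_encard_of_injOn (f := fun C => connectedComponentIn (s ∩ f ⁻¹' A) (p C))
    (fun C hC => mem_image_of_mem _ (hp C hC)) fun C hC C' hC' hCC' => ?_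
  have hmem : f (p C') ∈ C := himage C hC <| mem_image_of_mem f <| by
    simp only at hCC'
    rw [hCC']
    exact mem_connectedComponentIn (hp C' hC')
  exact (eq_connectedComponentIn_of_mem hC.1 hmem).trans
    (eq_connectedComponentIn_of_mem hC'.1 (hpC C' hC')).symm

theorem encard_connectedComponentsIn_le_of_forall_finset {A : Set α} {c : ℝ≥0∞}
    (h : ∀ t : Finset α, ↑t ⊆ A → (t.card : ℝ≥0∞) ≤ c) :
    ((connectedComponentsIn A).encard : ℝ≥0∞) ≤ c := by
  obtain ⟨A', hA', hbij⟩ := exists_subset_bijOn A (connectedComponentIn A)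
  rw [connectedComponentsIn, ← hbij.image_eq, hbij.injOn.encard_image]
  exact encard_le_of_forall_finset fun t ht => h t (ht.trans hA')

end Components

namespace IsMatching

variable {α : Type*} {π : α → α}

theorem exists_of_even_card [Fintype α] (h : Even (Fintype.card α)) :
    ∃ π : α → α, IsMatching π := by
  obtain ⟨n, hn⟩ := h
  have hcard : Fintype.card α = Fintype.card (Fin n × Fin 2) := by
    rw [Fintype.card_prod, Fintype.card_fin, Fintype.card_fin]
    omega
  let e := Fintype.equivOfCardEq hcard
  refine ⟨fun a => e.symm ((e a).1, (e a).2 + 1), fun a => ?_, fun a h => ?_⟩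
  · simp only [Equiv.apply_symm_apply, add_assoc, show (1 + 1 : Fin 2) = 0 from rfl, add_zero]
    exact e.symm_apply_apply a
  · have := congrArg Prod.snd (e.symm.injective (h.trans (e.symm_apply_apply a).symm))
    simp at this

theorem sum_eq_two_nsmul_sum_filter_lt_s12 [LinearOrder α] {M : Type*} [AddCommMonoid M]
    (hπ : IsMatching π) {s : Finset α} (hs : ∀ x ∈ s, π x ∈ s) {f : α → M}
    (hf : ∀ x, f (π x) = f x) :
    ∑ x ∈ s, f x = 2 • ∑ x ∈ s with x < π x, f x := by
  rw [← Finset.sum_filter_add_sum_filter_not s (fun x => x < π x), two_nsmul]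
  congr 1
  refine Finset.sum_nbij' π π ?_ ?_ (fun x _ => hπ.1 x) (fun x _ => hπ.1 x) fun x _ => (hf x).symm
  · intro x hx
    simp only [Finset.mem_filter] at hx ⊢
    rw [hπ.1 x]
    exact ⟨hs x hx.1, lt_of_le_of_ne (not_lt.1 hx.2) (hπ.2 x)⟩
  · intro x hx
    simp only [Finset.mem_filter] at hx ⊢
    exact ⟨hs x hx.1, (hπ.1 x).symm ▸ hx.2.asymm⟩

theorem even_card (hπ : IsMatching π) {s : Finset α} (hs : ∀ x ∈ s, π x ∈ s) : Even s.card := by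
  let _ : LinearOrder α := IsWellOrder.linearOrder WellOrderingRel
  rw [Finset.card_eq_sum_ones, hπ.sum_eq_two_nsmul_sum_filter_lt_s12 hs fun _ => rfl, two_nsmul]
  exact ⟨_, rfl⟩

theorem matchVal_eq_sum_filter_lt [Fintype α] [LinearOrder α] (hπ : IsMatching π)
    {d : α → α → ℝ} (hd : ∀ x y, d x y = d y x) :
    matchVal d π = ∑ x with x < π x, d x (π x) := by
  rw [matchVal, hπ.sum_eq_two_nsmul_sum_filter_lt_s12 (fun x _ => Finset.mem_univ _)
    fun x => by rw [hπ.1 x, hd], two_nsmul]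
  ring

end IsMatching

theorem exists_matchVal_eq_matchNum {α : Type*} [Fintype α] (h : ∃ π : α → α, IsMatching π)
    (d : α → α → ℝ) : ∃ π, IsMatching π ∧ matchVal d π = matchNum d := by
  set S := {r | ∃ π : α → α, IsMatching π ∧ r = matchVal d π}
  have hfin : S.Finite := (finite_range (matchVal d)).subset fun r ⟨π, _, hr⟩ => ⟨π, hr.symm⟩
  obtain ⟨π, hπ⟩ := h
  have hne : S.Nonempty := ⟨_, π, hπ, rfl⟩
  obtain ⟨π', hπ', hval⟩ := hne.csInf_mem hfin
  exact ⟨π', hπ', hval.symm⟩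

theorem ncard_setOf_mem_and_mem {Y : Type*} (X : Finset Y) (O : Set Y) :
    {y : Y | y ∈ X ∧ y ∈ O}.ncard = {x : X | (x : Y) ∈ O}.ncard := by
  have : {y : Y | y ∈ X ∧ y ∈ O} = Subtype.val '' {x : X | (x : Y) ∈ O} := by
    ext y
    simp [and_comm]
  rw [this, ncard_image_of_injective _ Subtype.val_injective]

theorem IsZ2Cut.exists_inter_nonempty {Y : Type*} [TopologicalSpace Y] {C : Set Y}
    {X : Finset Y} (hC : IsZ2Cut C X) {π : X → X} (hπ : IsMatching π) {R : Finset X}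
    (hR : ∀ x, x ∈ R ∨ π x ∈ R) {G : X → Set Y} (hG : ∀ r ∈ R, IsPreconnected (G r))
    (hGr : ∀ r ∈ R, (r : Y) ∈ G r ∧ (π r : Y) ∈ G r) : ∃ r ∈ R, (G r ∩ C).Nonempty := by
  obtain ⟨q, -, hodd⟩ := hC
  obtain ⟨x, hx, hπx⟩ : ∃ x : X, (x : Y) ∈ connectedComponentIn Cᶜ q ∧
      (π x : Y) ∉ connectedComponentIn Cᶜ q := by
    by_contra! hclosed
    classical
    rw [ncard_setOf_mem_and_mem, ncard_eq_toFinset_card', toFinset_ofPred] at hodd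
    refine Nat.not_odd_iff_even.2 (hπ.even_card fun x hx => ?_) hodd
    simp only [Finset.mem_filter, Finset.mem_univ, true_and] at hx ⊢
    exact hclosed x hx
  rcases hR x with hxR | hπxR
  · exact ⟨x, hxR, (hG x hxR).inter_nonempty_of_mem_connectedComponentIn_compl
      (hGr x hxR).1 (hGr x hxR).2 hx hπx⟩
  · have hπx' : (π (π x) : Y) ∈ connectedComponentIn Cᶜ q := by rwa [hπ.1 x]
    exact ⟨π x, hπxR, (hG _ hπxR).inter_nonempty_of_mem_connectedComponentIn_compl
      (hGr _ hπxR).2 (hGr _ hπxR).1 hπx' hπx⟩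

theorem cutZ2_le_sum_encard_connectedComponentsIn {Y : Type*} [TopologicalSpace Y] (A : Set Y)
    {X : Finset Y} {π : X → X} (hπ : IsMatching π) {R : Finset X} (hR : ∀ x, x ∈ R ∨ π x ∈ R)
    {S : X → Set ℝ} {γ : X → ℝ → Y} (hS : ∀ r ∈ R, IsPreconnected (S r))
    (hγ : ∀ r ∈ R, ContinuousOn (γ r) (S r))
    (hends : ∀ r ∈ R, (r : Y) ∈ γ r '' S r ∧ (π r : Y) ∈ γ r '' S r) :
    cutZ2 A X ≤ ∑ r ∈ R, ((connectedComponentsIn (S r ∩ γ r ⁻¹' A)).encard : ℝ≥0∞) := by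
  have hcover : {C ∈ connectedComponentsIn A | IsZ2Cut C X} ⊆
      ⋃ r ∈ R, {C ∈ connectedComponentsIn A | (C ∩ γ r '' S r).Nonempty} := by
    rintro C ⟨hCA, hC⟩
    obtain ⟨r, hr, hrC⟩ := hC.exists_inter_nonempty hπ hR
      (fun r hr => (hS r hr).image _ (hγ r hr)) hends
    exact mem_biUnion hr ⟨hCA, inter_comm _ C ▸ hrC⟩
  calc cutZ2 A X = ({C ∈ connectedComponentsIn A | IsZ2Cut C X}.encard : ℝ≥0∞) := cutZ2_eq A X
    _ ≤ ((∑ r ∈ R, (connectedComponentsIn (S r ∩ γ r ⁻¹' A)).encard : ℕ∞) : ℝ≥0∞) :=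
      ENat.toENNReal_le.2 <| (encard_le_encard hcover).trans <|
        (Finset.set_encard_biUnion_le R _).trans <| Finset.sum_le_sum fun r hr =>
          encard_connectedComponentsIn_inter_image_le (hγ r hr) A
    _ = _ := map_sum ENat.toENNRealRingHom _ R

theorem exists_le_mem_Icc_mul (n : ℕ) {δ s : ℝ} (hs : s ∈ Icc 0 ((n + 1) * δ)) :
    ∃ i ≤ n, s ∈ Icc (i * δ) ((i + 1) * δ) := by
  induction n with
  | zero => exact ⟨0, le_rfl, by simpa using hs⟩
  | succ n ih =>
    by_cases hsn : s ≤ (n + 1) * δ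
    · obtain ⟨i, hi, hsi⟩ := ih ⟨hs.1, hsn⟩
      exact ⟨i, hi.trans n.le_succ, hsi⟩
    · push_cast at hs ⊢
      exact ⟨n + 1, le_rfl, by push_cast; linarith, by push_cast; exact hs.2⟩

section Partition

variable {h : ℝ → ℝ} {L : ℝ}

def partitionPiece (L : ℝ) (N i : ℕ) : Set ℝ :=
  Icc (i * (L / N)) ((i + 1) * (L / N))

noncomputable def partitionCount (h : ℝ → ℝ) (L : ℝ) (N : ℕ) (t : ℝ) : ℝ≥0∞ :=
  ∑ i ∈ Finset.range N, (h '' partitionPiece L N i).indicator 1 t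

theorem partitionPiece_subset (hL : 0 ≤ L) {N i : ℕ} (hi : i < N) :
    partitionPiece L N i ⊆ Icc 0 L := by
  have hδ : 0 ≤ L / N := by positivity
  have hiN : (i : ℝ) + 1 ≤ N := by exact_mod_cast hi
  have hNδ : (N : ℝ) * (L / N) = L := mul_div_cancel₀ L (Nat.cast_ne_zero.2 (by omega))
  rintro s ⟨hs₀, hs₁⟩
  constructor <;> nlinarith

theorem exists_mem_partitionPiece {s : ℝ} (hs : s ∈ Icc 0 L) {N : ℕ} (hN : N ≠ 0) :
    ∃ i < N, s ∈ partitionPiece L N i := by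
  obtain ⟨n, rfl⟩ := Nat.exists_eq_succ_of_ne_zero hN
  have hL : ((n : ℝ) + 1) * (L / (n + 1 : ℕ)) = L := by
    push_cast
    exact mul_div_cancel₀ L (by positivity)
  obtain ⟨i, hi, hsi⟩ := exists_le_mem_Icc_mul n (hL.symm ▸ hs)
  exact ⟨i, Nat.lt_succ_of_le hi, hsi⟩

theorem abs_sub_le_of_mem_partitionPiece {N i : ℕ} {x y : ℝ} (hx : x ∈ partitionPiece L N i)
    (hy : y ∈ partitionPiece L N i) : |x - y| ≤ L / N := by
  obtain ⟨hx₀, hx₁⟩ := hx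
  obtain ⟨hy₀, hy₁⟩ := hy
  rw [abs_sub_le_iff]
  constructor <;> linarith

theorem measurableSet_image_partitionPiece (hh : ContinuousOn h (Icc 0 L)) (hL : 0 ≤ L)
    {N i : ℕ} (hi : i < N) : MeasurableSet (h '' partitionPiece L N i) :=
  (isCompact_Icc.image_of_continuousOn
    (hh.mono (partitionPiece_subset hL hi))).isClosed.measurableSet

theorem measurable_partitionCount (hh : ContinuousOn h (Icc 0 L)) (hL : 0 ≤ L) (N : ℕ) :
    Measurable (partitionCount h L N) :=
  Finset.measurable_sum _ fun _ hi => measurable_one.indicator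
    (measurableSet_image_partitionPiece hh hL (Finset.mem_range.1 hi))

/-- Each piece has length `L / N`, and so has its image under the `1`-Lipschitz `h`. -/
theorem lintegral_partitionCount_le (hh : LipschitzOnWith 1 h (Icc 0 L)) (hL : 0 ≤ L) (N : ℕ) :
    ∫⁻ t, partitionCount h L N t ≤ ENNReal.ofReal L := by
  have hmeas := fun i (hi : i ∈ Finset.range N) =>
    measurableSet_image_partitionPiece hh.continuousOn hL (Finset.mem_range.1 hi)
  have hpiece : ∀ i ∈ Finset.range N,
      volume (h '' partitionPiece L N i) ≤ ENNReal.ofReal (L / N) := by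
    intro i hi
    have hlip := (hh.mono (partitionPiece_subset hL (Finset.mem_range.1 hi))).holderOnWith
    refine (Real.volume_le_diam _).trans (hlip.ediam_image_le.trans_eq ?_)
    rw [partitionPiece, Real.ediam_Icc]
    simp only [ENNReal.coe_one, NNReal.coe_one, ENNReal.rpow_one, one_mul]
    ring_nf
  simp only [partitionCount]
  rw [lintegral_finsetSum _ fun i hi => measurable_one.indicator (hmeas i hi)]
  calc ∑ i ∈ Finset.range N, ∫⁻ t, (h '' partitionPiece L N i).indicator 1 t
      = ∑ i ∈ Finset.range N, volume (h '' partitionPiece L N i) :=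
        Finset.sum_congr rfl fun i hi => lintegral_indicator_one (hmeas i hi)
    _ ≤ ∑ _i ∈ Finset.range N, ENNReal.ofReal (L / N) := Finset.sum_le_sum hpiece
    _ ≤ ENNReal.ofReal L := by
        rcases N.eq_zero_or_pos with rfl | hN
        · simp
        rw [Finset.sum_const, Finset.card_range, nsmul_eq_mul, ← ENNReal.ofReal_natCast,
          ← ENNReal.ofReal_mul (by positivity), mul_div_cancel₀ L (by positivity)]

/-- Once the mesh `L / N` is below the gaps between the points of `P`, these points lie in
distinct pieces. -/
theorem natCast_card_le_liminf_partitionCount {t : ℝ} {P : Finset ℝ}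
    (hP : ↑P ⊆ Icc 0 L ∩ h ⁻¹' {t}) :
    (P.card : ℝ≥0∞) ≤ liminf (fun N => partitionCount h L N t) atTop := by
  classical
  have hsep : ∀ᶠ N : ℕ in atTop, N ≠ 0 ∧ ∀ p ∈ P, ∀ q ∈ P, p ≠ q → L / N < |p - q| := by
    refine (eventually_ne_atTop 0).and <| P.eventually_all.2 fun p _ =>
      P.eventually_all.2 fun q _ => ?_
    rcases eq_or_ne p q with rfl | hpq
    · exact Eventually.of_forall fun _ h => (h rfl).elim
    · exact ((tendsto_const_div_atTop_nhds_zero_nat L).eventually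
        (gt_mem_nhds (abs_pos.2 (sub_ne_zero.2 hpq)))).mono fun _ hN _ => hN
  refine le_liminf_of_le (by isBoundedDefault) (hsep.mono fun N ⟨hN, hNsep⟩ => ?_)
  choose! idx hidx hmem using fun p (hp : p ∈ P) => exists_mem_partitionPiece (hP hp).1 hN
  simp only [partitionCount, indicator_apply, Pi.one_apply]
  rw [Finset.sum_boole]
  refine Nat.cast_le.2 (Finset.card_le_card_of_injOn idx (fun p hp => ?_) fun p hp q hq hpq => ?_)
  · exact Finset.mem_filter.2 ⟨Finset.mem_range.2 (hidx p hp), p, hmem p hp, (hP hp).2⟩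
  · by_contra hne
    have := abs_sub_le_of_mem_partitionPiece (hmem p hp) (hpq ▸ hmem q hq)
    exact (hNsep p hp q hq hne).not_ge this

theorem encard_connectedComponentsIn_le_liminf_partitionCount (t : ℝ) :
    ((connectedComponentsIn (Icc 0 L ∩ h ⁻¹' {t})).encard : ℝ≥0∞) ≤
      liminf (fun N => partitionCount h L N t) atTop :=
  encard_connectedComponentsIn_le_of_forall_finset fun _ hP =>
    natCast_card_le_liminf_partitionCount hP

theorem lintegral_liminf_partitionCount_le (hh : LipschitzOnWith 1 h (Icc 0 L)) (hL : 0 ≤ L) :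
    ∫⁻ t, liminf (fun N => partitionCount h L N t) atTop ≤ ENNReal.ofReal L :=
  (lintegral_liminf_le (measurable_partitionCount hh.continuousOn hL)).trans <|
    liminf_le_of_frequently_le' (Frequently.of_forall (lintegral_partitionCount_le hh hL))

end Partition

theorem lintegral_cutZ2_le_matchVal {Y : Type*} [MetricSpace Y] (hgeo : IsGeodesicSpace Y)
    (X : Finset Y) {g : Y → ℝ} (hg : LipschitzWith 1 g) {π : X → X} (hπ : IsMatching π) :
    ∫⁻ t, cutZ2 (g ⁻¹' {t}) X ≤ ENNReal.ofReal (matchVal (fun x y : X => dist x.1 y.1) π) := by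
  let _ : LinearOrder X := IsWellOrder.linearOrder WellOrderingRel
  set R := Finset.univ.filter fun x : X => x < π x
  have hR : ∀ x, x ∈ R ∨ π x ∈ R := fun x => by
    simp only [R, Finset.mem_filter, Finset.mem_univ, true_and, hπ.1 x]
    exact lt_or_gt_of_ne (hπ.2 x).symm
  set L : X → ℝ := fun x => dist (x : Y) (π x)
  choose γ hγ0 hγL hγ using fun x : X => hgeo x (π x)
  have hγlip : ∀ x, LipschitzOnWith 1 (γ x) (Icc 0 (L x)) := fun x =>
    .of_dist_le_mul fun s hs u hu => by rw [hγ x s hs u hu, NNReal.coe_one, one_mul, Real.dist_eq]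
  have hglip : ∀ x, LipschitzOnWith 1 (g ∘ γ x) (Icc 0 (L x)) := fun x => by
    simpa using hg.comp_lipschitzOnWith (hγlip x)
  set M : X → ℝ → ℝ≥0∞ := fun x t => liminf (fun N => partitionCount (g ∘ γ x) (L x) N t) atTop
  have hcut : ∀ t, cutZ2 (g ⁻¹' {t}) X ≤ ∑ r ∈ R, M r t := fun t =>
    (cutZ2_le_sum_encard_connectedComponentsIn _ hπ hR (fun r _ => isPreconnected_Icc)
      (fun r _ => (hγlip r).continuousOn) fun r _ =>
        ⟨⟨0, left_mem_Icc.2 dist_nonneg, hγ0 r⟩, ⟨L r, right_mem_Icc.2 dist_nonneg, hγL r⟩⟩).trans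
      (Finset.sum_le_sum fun r _ => encard_connectedComponentsIn_le_liminf_partitionCount t)
  calc ∫⁻ t, cutZ2 (g ⁻¹' {t}) X ≤ ∫⁻ t, ∑ r ∈ R, M r t := lintegral_mono hcut
    _ = ∑ r ∈ R, ∫⁻ t, M r t := lintegral_finsetSum _ fun r _ =>
        .liminf (measurable_partitionCount (hglip r).continuousOn dist_nonneg)
    _ ≤ ∑ r ∈ R, ENNReal.ofReal (L r) := Finset.sum_le_sum fun r _ =>
        lintegral_liminf_partitionCount_le (hglip r) dist_nonneg
    _ = ENNReal.ofReal (matchVal (fun x y : X => dist x.1 y.1) π) := by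
        rw [← ENNReal.ofReal_sum_of_nonneg fun r _ => dist_nonneg,
          hπ.matchVal_eq_sum_filter_lt fun x y => dist_comm _ _]

/-- Let `(Y,d)` be a geodesic metric space, `X ⊆ Y` a finite subset of even cardinality and
`g : Y → ℝ` a `1`-Lipschitz function.  Then `∫_ℝ Cut_{ℤ₂}(g⁻¹(t), X) dt ≤ m(X,d)`. -/
theorem stmt12 {Y : Type*} [MetricSpace Y] (hgeo : IsGeodesicSpace Y)
    (X : Finset Y) (hX : Even X.card) (g : Y → ℝ) (hg : LipschitzWith 1 g) :
    (∫⁻ t : ℝ, cutZ2 (g ⁻¹' {t}) X) ≤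
      ENNReal.ofReal (matchNum (fun x y : ↥X => dist x.1 y.1)) := by
  obtain ⟨π, hπ, hval⟩ := exists_matchVal_eq_matchNum
    (IsMatching.exists_of_even_card (by rwa [Fintype.card_coe])) fun x y : X => dist x.1 y.1
  rw [← hval]
  exact lintegral_cutZ2_le_matchVal hgeo X hg hπ
end
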